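/- arXiv:2406.05775 — 9 statements merged into one kernel-verified Lean document; each statement's English description precedes it below -/
import Mathlib

section
/- Let n ∈ ℕ, u₀ > 0, and u : [n] → ℝ≥0 with u₁ ≥ u₂ ≥ ... ≥ uₙ ≥ 0, and let γ ≥ 1 be an integer. Define Φ(S) = max { u(S')/(u(S') + u₀) : S' ⊆ S, |S'| ≤ γ } where u(S') = ∑_{j∈S'} u_j. Then Φ is submodular: for all S ⊆ T ⊆ [n] and j ∈ [n]\T, Φ(S ∪ {j}) − Φ(S) ≥ Φ(T ∪ {j}) − Φ(T). -/
open Finset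

/-- The probability function `Φ(S) = max { u(S')/(u(S')+u₀) : S' ⊆ S, |S'| ≤ γ }`. -/
noncomputable def Phi (γ : ℕ) (u : ℕ → ℝ) (u0 : ℝ) (S : Finset ℕ) : ℝ :=
  ((S.powerset.filter fun S' => S'.card ≤ γ).image
      fun S' => (∑ j ∈ S', u j) / ((∑ j ∈ S', u j) + u0)).max'
    (Finset.Nonempty.image ⟨∅, Finset.mem_filter.mpr ⟨Finset.empty_mem_powerset S, by simp⟩⟩ _)

/-- Auxiliary: the maximal utility sum over feasible subsets. -/
noncomputable def Msum (γ : ℕ) (u : ℕ → ℝ) (S : Finset ℕ) : ℝ :=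
  ((S.powerset.filter fun S' => S'.card ≤ γ).image fun S' => ∑ j ∈ S', u j).max'
    (Finset.Nonempty.image ⟨∅, Finset.mem_filter.mpr ⟨Finset.empty_mem_powerset S, by simp⟩⟩ _)

lemma le_Msum (γ : ℕ) (u : ℕ → ℝ) (S : Finset ℕ) {S' : Finset ℕ} (h1 : S' ⊆ S)
    (h2 : S'.card ≤ γ) : ∑ j ∈ S', u j ≤ Msum γ u S := by
  apply Finset.le_max'
  exact Finset.mem_image.mpr ⟨S', Finset.mem_filter.mpr ⟨Finset.mem_powerset.mpr h1, h2⟩, rfl⟩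

lemma exists_Msum (γ : ℕ) (u : ℕ → ℝ) (S : Finset ℕ) :
    ∃ S', S' ⊆ S ∧ S'.card ≤ γ ∧ Msum γ u S = ∑ j ∈ S', u j := by
  have h : Msum γ u S ∈ (S.powerset.filter fun S' => S'.card ≤ γ).image
      fun S' => ∑ j ∈ S', u j := Finset.max'_mem _ _
  rw [Finset.mem_image] at h
  obtain ⟨S', hS', heq⟩ := h
  rw [Finset.mem_filter, Finset.mem_powerset] at hS'
  exact ⟨S', hS'.1, hS'.2, heq.symm⟩

lemma Msum_nonneg (γ : ℕ) (u : ℕ → ℝ) (S : Finset ℕ) : 0 ≤ Msum γ u S := by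
  have := le_Msum γ u S (S' := ∅) (Finset.empty_subset S) (by simp)
  simpa using this

lemma Msum_mono (γ : ℕ) (u : ℕ → ℝ) {S T : Finset ℕ} (h : S ⊆ T) :
    Msum γ u S ≤ Msum γ u T := by
  obtain ⟨S', h1, h2, h3⟩ := exists_Msum γ u S
  rw [h3]
  exact le_Msum γ u T (h1.trans h) h2

lemma Msum_submodular (γ : ℕ) (u : ℕ → ℝ) {S T : Finset ℕ} (hST : S ⊆ T)
    {j : ℕ} (hjT : j ∉ T) :
    Msum γ u (insert j T) + Msum γ u S ≤ Msum γ u (insert j S) + Msum γ u T := by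
  obtain ⟨A, hA1, hA2, hA3⟩ := exists_Msum γ u (insert j T)
  obtain ⟨B, hB1, hB2, hB3⟩ := exists_Msum γ u S
  by_cases hjA : j ∈ A
  · -- A = insert j A', A' ⊆ T
    set A' := A.erase j with hA'
    have hA'T : A' ⊆ T := by
      intro x hx
      have hx1 := Finset.mem_of_mem_erase hx
      have hx2 := Finset.ne_of_mem_erase hx
      rcases Finset.mem_insert.mp (hA1 hx1) with h | h
      · exact absurd h hx2
      · exact h
    have hA'card : A'.card = A.card - 1 := Finset.card_erase_of_mem hjA
    have hAcard : 1 ≤ A.card := Finset.card_pos.mpr ⟨j, hjA⟩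
    have hsumA : ∑ x ∈ A, u x = ∑ x ∈ A', u x + u j := by
      rw [hA']
      exact (Finset.sum_erase_add A u hjA).symm
    have hjB : j ∉ B := fun h => hjT (hST (hB1 h))
    by_cases hBγ : B.card < γ
    · -- use B ∪ {j} for insert j S, A' for T
      have h1 : ∑ x ∈ insert j B, u x ≤ Msum γ u (insert j S) := by
        apply le_Msum
        · exact Finset.insert_subset_insert j hB1
        · rw [Finset.card_insert_of_notMem hjB]; omega
      have h2 : ∑ x ∈ A', u x ≤ Msum γ u T := le_Msum γ u T hA'T (by omega)
      rw [Finset.sum_insert hjB] at h1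
      rw [hA3, hB3, hsumA]
      linarith
    · -- |B| = γ ≥ 1; pick b ∈ B \ A'
      have hBγ' : B.card = γ := by omega
      have hA'B : ¬ B ⊆ A' := by
        intro h
        have := Finset.card_le_card h
        omega
      obtain ⟨b, hbB, hbA'⟩ := Finset.not_subset.mp hA'B
      have hbS : b ∈ S := hB1 hbB
      have hbj : b ≠ j := fun h => hjB (h ▸ hbB)
      -- use (B.erase b) ∪ {j} for insert j S, A' ∪ {b} for T
      have h1 : ∑ x ∈ insert j (B.erase b), u x ≤ Msum γ u (insert j S) := by
        apply le_Msum
        · intro x hx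
          rcases Finset.mem_insert.mp hx with h | h
          · exact h ▸ Finset.mem_insert_self j S
          · exact Finset.mem_insert_of_mem (hB1 (Finset.mem_of_mem_erase h))
        · rw [Finset.card_insert_of_notMem (fun h => hjB (Finset.mem_of_mem_erase h)),
            Finset.card_erase_of_mem hbB]
          omega
      have h2 : ∑ x ∈ insert b A', u x ≤ Msum γ u T := by
        apply le_Msum
        · exact Finset.insert_subset (hST hbS) hA'T
        · rw [Finset.card_insert_of_notMem hbA']; omega
      rw [Finset.sum_insert (fun h => hjB (Finset.mem_of_mem_erase h))] at h1
      rw [Finset.sum_insert hbA'] at h2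
      have hsumB : ∑ x ∈ B.erase b, u x + u b = ∑ x ∈ B, u x :=
        Finset.sum_erase_add B u hbB
      rw [hA3, hB3, hsumA]
      linarith
  · -- j ∉ A: A ⊆ T
    have hAT : A ⊆ T := by
      intro x hx
      rcases Finset.mem_insert.mp (hA1 hx) with h | h
      · exact absurd (h ▸ hx) hjA
      · exact h
    have h1 : Msum γ u (insert j T) ≤ Msum γ u T := by
      rw [hA3]; exact le_Msum γ u T hAT hA2
    have h2 : Msum γ u S ≤ Msum γ u (insert j S) :=
      Msum_mono γ u (Finset.subset_insert j S)
    linarith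

lemma fdiv_mono {u0 x y : ℝ} (hu0 : 0 < u0) (hx : 0 ≤ x) (hxy : x ≤ y) :
    x / (x + u0) ≤ y / (y + u0) := by
  rw [div_le_div_iff₀ (by linarith) (by linarith)]
  nlinarith

lemma Phi_eq (γ : ℕ) (u : ℕ → ℝ) (u0 : ℝ) (hu0 : 0 < u0) (S : Finset ℕ)
    (hS : ∀ x ∈ S, 0 ≤ u x) :
    Phi γ u u0 S = Msum γ u S / (Msum γ u S + u0) := by
  apply le_antisymm
  · apply Finset.max'_le
    intro y hy
    rw [Finset.mem_image] at hy
    obtain ⟨S', hS', heq⟩ := hy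
    rw [Finset.mem_filter, Finset.mem_powerset] at hS'
    rw [← heq]
    have hnn : 0 ≤ ∑ j ∈ S', u j := Finset.sum_nonneg fun i hi => hS i (hS'.1 hi)
    exact fdiv_mono hu0 hnn (le_Msum γ u S hS'.1 hS'.2)
  · obtain ⟨S', h1, h2, h3⟩ := exists_Msum γ u S
    rw [h3]
    apply Finset.le_max'
    exact Finset.mem_image.mpr ⟨S', Finset.mem_filter.mpr ⟨Finset.mem_powerset.mpr h1, h2⟩, rfl⟩

lemma key_ineq {u0 a b a' b' : ℝ} (hu0 : 0 < u0) (ha : 0 ≤ a) (hab : a ≤ b)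
    (haa' : a ≤ a') (hbb' : b ≤ b') (ha'b' : a' ≤ b') (hsub : b' - b ≤ a' - a) :
    b' / (b' + u0) - b / (b + u0) ≤ a' / (a' + u0) - a / (a + u0) := by
  have hb : (0:ℝ) < b + u0 := by linarith
  have hb' : (0:ℝ) < b' + u0 := by linarith
  have ha2 : (0:ℝ) < a + u0 := by linarith
  have ha' : (0:ℝ) < a' + u0 := by linarith
  have e1 : b' / (b' + u0) - b / (b + u0) = u0 * (b' - b) / ((b + u0) * (b' + u0)) := by
    field_simp; ring
  have e2 : a' / (a' + u0) - a / (a + u0) = u0 * (a' - a) / ((a + u0) * (a' + u0)) := by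
    field_simp; ring
  rw [e1, e2, div_le_div_iff₀ (by positivity) (by positivity)]
  have hPQ : (a + u0) * (a' + u0) ≤ (b + u0) * (b' + u0) :=
    mul_le_mul (by linarith) (by linarith) (by linarith) (by linarith)
  have h1 : u0 * (b' - b) * ((a + u0) * (a' + u0)) ≤
      u0 * (a' - a) * ((a + u0) * (a' + u0)) := by
    apply mul_le_mul_of_nonneg_right (by nlinarith) (by positivity)
  have h2 : u0 * (a' - a) * ((a + u0) * (a' + u0)) ≤
      u0 * (a' - a) * ((b + u0) * (b' + u0)) := by
    apply mul_le_mul_of_nonneg_left hPQ (by nlinarith)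
  linarith

/-- `Φ` is submodular. -/
theorem stmt_0 (n γ : ℕ) (hγ : 1 ≤ γ) (u : ℕ → ℝ) (u0 : ℝ) (hu0 : 0 < u0)
    (hnn : ∀ j ∈ Finset.Icc 1 n, 0 ≤ u j)
    (hmono : ∀ j ∈ Finset.Icc 1 n, ∀ k ∈ Finset.Icc 1 n, j ≤ k → u k ≤ u j)
    (S T : Finset ℕ) (hST : S ⊆ T) (hT : T ⊆ Finset.Icc 1 n)
    (j : ℕ) (hj : j ∈ Finset.Icc 1 n) (hjT : j ∉ T) :
    Phi γ u u0 (T ∪ {j}) - Phi γ u u0 T ≤ Phi γ u u0 (S ∪ {j}) - Phi γ u u0 S := by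
  have hS : S ⊆ Finset.Icc 1 n := hST.trans hT
  have hSj : S ∪ {j} ⊆ Finset.Icc 1 n := Finset.union_subset hS (by simpa using hj)
  have hTj : T ∪ {j} ⊆ Finset.Icc 1 n := Finset.union_subset hT (by simpa using hj)
  rw [Phi_eq γ u u0 hu0 S (fun x hx => hnn x (hS hx)),
    Phi_eq γ u u0 hu0 T (fun x hx => hnn x (hT hx)),
    Phi_eq γ u u0 hu0 (S ∪ {j}) (fun x hx => hnn x (hSj hx)),
    Phi_eq γ u u0 hu0 (T ∪ {j}) (fun x hx => hnn x (hTj hx))]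
  have eS : S ∪ {j} = insert j S := by ext x; simp [or_comm]
  have eT : T ∪ {j} = insert j T := by ext x; simp [or_comm]
  rw [eS, eT]
  have ha : 0 ≤ Msum γ u S := Msum_nonneg γ u S
  have hab : Msum γ u S ≤ Msum γ u T := Msum_mono γ u hST
  have haa' : Msum γ u S ≤ Msum γ u (insert j S) := Msum_mono γ u (Finset.subset_insert j S)
  have hbb' : Msum γ u T ≤ Msum γ u (insert j T) := Msum_mono γ u (Finset.subset_insert j T)
  have ha'b' : Msum γ u (insert j S) ≤ Msum γ u (insert j T) :=
    Msum_mono γ u (Finset.insert_subset_insert j hST)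
  have hsub := Msum_submodular γ u hST hjT
  exact key_ineq hu0 ha hab haa' hbb' ha'b' (by linarith)
end

section
/- Under the setup of the previous definitions (u sorted nonincreasingly, u₀ > 0, γ ≥ 1), for any S ⊊ [n] and j ∈ [n]\S, the marginal gain satisfies ρ_j(S) := Φ(S∪{j}) − Φ(S) = u₀·(u_j − u_{k_S})⁺ / ((u(S^γ) + (u_j − u_{k_S})⁺ + u₀)·(u(S^γ) + u₀)), where (a)⁺ = max{a,0}. -/
open Finset

/-- `k_S = n+1` if `|S| ≤ γ-1`, otherwise the `γ`-th smallest element of `S`. -/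
def kS (γ n : ℕ) (S : Finset ℕ) : ℕ :=
  if S.card ≤ γ - 1 then n + 1 else (S.sort (· ≤ ·)).getD (γ - 1) 0

/-- `S^γ = S ∩ [k_S]`. -/
def Sgamma (γ n : ℕ) (S : Finset ℕ) : Finset ℕ :=
  S ∩ Finset.Icc 1 (kS γ n S)

/-! Since `u` is nonincreasing, `S^γ` (the `γ` smallest indices of `S`, i.e. its `γ` largest
weights) maximises `u(S')` over `S' ⊆ S` with `|S'| ≤ γ`, by an exchange argument with threshold
`u_{k_S}`; as `x ↦ x / (x + u₀)` is increasing, `Φ(S) = u(S^γ) / (u(S^γ) + u₀)`. Adding `j` to `S`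
changes `S^γ` only when `j < k_S`: then `j` displaces `k_S` (if `|S| < γ`, `k_S = n + 1` has
weight `0` and `j` just joins). So `u(S^γ)` grows by exactly `(u_j - u_{k_S})⁺`, and the formula
is the difference of two such fractions. -/

theorem Finset.filter_le_orderEmbOfFin {α : Type*} [LinearOrder α] (s : Finset α) {k : ℕ}
    (h : #s = k) (i : Fin k) :
    s.filter (· ≤ s.orderEmbOfFin h i) = (Iic i).map (s.orderEmbOfFin h).toEmbedding := by
  ext x
  constructor
  · intro hx
    rw [mem_filter] at hx
    obtain ⟨a, rfl⟩ : x ∈ Set.range (s.orderEmbOfFin h) := by simpa using hx.1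
    simpa using hx.2
  · simp only [mem_map, mem_Iic, mem_filter]
    rintro ⟨a, ha, rfl⟩
    exact ⟨orderEmbOfFin_mem .., by simpa using ha⟩

theorem Finset.card_filter_le_orderEmbOfFin {α : Type*} [LinearOrder α] (s : Finset α) {k : ℕ}
    (h : #s = k) (i : Fin k) : #(s.filter (· ≤ s.orderEmbOfFin h i)) = i + 1 := by
  rw [filter_le_orderEmbOfFin, card_map, Fin.card_Iic]

theorem Finset.eq_of_card_eq_of_lowerClosed {α : Type*} [LinearOrder α] {T A B : Finset α}
    (hAT : A ⊆ T) (hBT : B ⊆ T) (hA : ∀ x ∈ A, ∀ y ∈ T, y ≤ x → y ∈ A)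
    (hB : ∀ x ∈ B, ∀ y ∈ T, y ≤ x → y ∈ B) (hcard : #A = #B) : A = B := by
  by_contra hne
  obtain ⟨a, haA, haB⟩ := not_subset.mp fun h => hne (eq_of_subset_of_card_le h hcard.ge)
  have hBA : B ⊆ A := fun b hb => (le_total a b).elim
    (fun hab => absurd (hB b hb a (hAT haA) hab) haB) (fun hba => hA a haA b (hBT hb) hba)
  exact haB (eq_of_subset_of_card_le hBA hcard.le ▸ haA)

theorem sum_le_sum_of_threshold {ι M : Type*} [DecidableEq ι] [AddCommMonoid M] [PartialOrder M]
    [IsOrderedAddMonoid M] {S' G : Finset ι} {u : ι → M} {t : M}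
    (ht : 0 ≤ t) (hcard : #S' ≤ #G) (hG : ∀ i ∈ G, t ≤ u i) (hS' : ∀ i ∈ S' \ G, u i ≤ t) :
    ∑ i ∈ S', u i ≤ ∑ i ∈ G, u i := by
  rw [← sum_inter_add_sum_sdiff S' G, ← sum_inter_add_sum_sdiff G S', inter_comm]
  refine add_le_add_right ?_ (∑ i ∈ G ∩ S', u i)
  calc ∑ i ∈ S' \ G, u i ≤ #(S' \ G) • t := sum_le_card_nsmul _ _ _ hS'
    _ ≤ #(G \ S') • t := nsmul_le_nsmul_left ht (card_sdiff_le_card_sdiff_iff.mpr hcard)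
    _ ≤ ∑ i ∈ G \ S', u i := card_nsmul_le_sum _ _ _ fun i hi => hG i (mem_sdiff.mp hi).1

theorem kS_of_card_lt {γ : ℕ} (n : ℕ) {S : Finset ℕ} (hS : #S < γ) : kS γ n S = n + 1 :=
  if_pos (by omega)

theorem kS_eq_orderEmbOfFin {γ : ℕ} (n : ℕ) {S : Finset ℕ} (hγ : 1 ≤ γ) (hS : γ ≤ #S) :
    kS γ n S = S.orderEmbOfFin rfl ⟨γ - 1, by omega⟩ := by
  rw [kS, if_neg (by omega), orderEmbOfFin_apply, List.getD_eq_getElem?_getD,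
    List.getElem?_eq_getElem]
  rfl

theorem kS_mem_and_card_filter {γ : ℕ} (n : ℕ) {S : Finset ℕ} (hγ : 1 ≤ γ) (hS : γ ≤ #S) :
    kS γ n S ∈ S ∧ #(S.filter (· ≤ kS γ n S)) = γ := by
  rw [kS_eq_orderEmbOfFin n hγ hS, card_filter_le_orderEmbOfFin]
  exact ⟨orderEmbOfFin_mem .., by simp; omega⟩

theorem kS_mem_Icc {γ n : ℕ} {S : Finset ℕ} (hγ : 1 ≤ γ) (hS : S ⊆ Icc 1 n) :
    kS γ n S ∈ Icc 1 (n + 1) := by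
  rcases lt_or_ge #S γ with h | h
  · rw [kS_of_card_lt n h]
    simp
  · exact Icc_subset_Icc_right n.le_succ (hS (kS_mem_and_card_filter n hγ h).1)

theorem Sgamma_subset (γ n : ℕ) (S : Finset ℕ) : Sgamma γ n S ⊆ S :=
  inter_subset_left

theorem mem_Sgamma_iff {γ n : ℕ} {S : Finset ℕ} (hS : S ⊆ Icc 1 n) {i : ℕ} :
    i ∈ Sgamma γ n S ↔ i ∈ S ∧ i ≤ kS γ n S := by
  simp only [Sgamma, mem_inter, mem_Icc]
  exact ⟨fun h => ⟨h.1, h.2.2⟩, fun h => ⟨h.1, (mem_Icc.mp (hS h.1)).1, h.2⟩⟩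

theorem Sgamma_eq_filter {γ n : ℕ} {S : Finset ℕ} (hS : S ⊆ Icc 1 n) :
    Sgamma γ n S = S.filter (· ≤ kS γ n S) := by
  ext i
  rw [mem_Sgamma_iff hS, mem_filter]

theorem Sgamma_eq_self {γ n : ℕ} {S : Finset ℕ} (hγ : 1 ≤ γ) (hS : S ⊆ Icc 1 n) (hcard : #S ≤ γ) :
    Sgamma γ n S = S := by
  rw [Sgamma_eq_filter hS]
  rcases hcard.lt_or_eq with hlt | rfl
  · refine filter_true_of_mem fun i hi => ?_
    rw [kS_of_card_lt n hlt]
    exact (mem_Icc.mp (hS hi)).2.trans n.le_succ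
  · exact eq_of_subset_of_card_le (filter_subset _ _)
      (kS_mem_and_card_filter n hγ le_rfl).2.ge

theorem card_Sgamma {γ n : ℕ} {S : Finset ℕ} (hγ : 1 ≤ γ) (hS : S ⊆ Icc 1 n) :
    #(Sgamma γ n S) = min γ #S := by
  rcases le_total #S γ with h | h
  · rw [Sgamma_eq_self hγ hS h, min_eq_right h]
  · rw [Sgamma_eq_filter hS, (kS_mem_and_card_filter n hγ h).2, min_eq_left h]

theorem Sgamma_eq_of_lowerClosed {γ n : ℕ} {T A : Finset ℕ} (hγ : 1 ≤ γ) (hT : T ⊆ Icc 1 n)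
    (hAT : A ⊆ T) (hA : #A = γ) (hlow : ∀ x ∈ A, ∀ y ∈ T, y ≤ x → y ∈ A) :
    Sgamma γ n T = A := by
  have hγT : γ ≤ #T := hA ▸ card_le_card hAT
  refine eq_of_card_eq_of_lowerClosed (Sgamma_subset γ n T) hAT ?_ hlow ?_
  · intro x hx y hy hyx
    rw [mem_Sgamma_iff hT] at hx ⊢
    exact ⟨hy, hyx.trans hx.2⟩
  · rw [card_Sgamma hγ hT, hA, min_eq_left hγT]

theorem Sgamma_insert_of_kS_lt {γ n j : ℕ} {S : Finset ℕ} (hγ : 1 ≤ γ) (hS : S ⊆ Icc 1 n)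
    (hj : j ∈ Icc 1 n) (hjS : j ∉ S) (hγS : γ ≤ #S) (hkj : kS γ n S < j) :
    Sgamma γ n (insert j S) = Sgamma γ n S := by
  refine Sgamma_eq_of_lowerClosed hγ (insert_subset hj hS)
    ((Sgamma_subset γ n S).trans (subset_insert _ _)) ?_ ?_
  · rw [Sgamma_eq_filter hS, (kS_mem_and_card_filter n hγ hγS).2]
  intro x hx y hy hyx
  rw [mem_Sgamma_iff hS] at hx ⊢
  rcases mem_insert.mp hy with rfl | hyS
  · omega
  · exact ⟨hyS, hyx.trans hx.2⟩

theorem Sgamma_insert_of_lt_kS {γ n j : ℕ} {S : Finset ℕ} (hγ : 1 ≤ γ) (hS : S ⊆ Icc 1 n)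
    (hj : j ∈ Icc 1 n) (hjS : j ∉ S) (hγS : γ ≤ #S) (hjk : j < kS γ n S) :
    Sgamma γ n (insert j S) = insert j ((Sgamma γ n S).erase (kS γ n S)) := by
  obtain ⟨hkS, hcard⟩ := kS_mem_and_card_filter n hγ hγS
  rw [← Sgamma_eq_filter hS] at hcard
  have hjG : j ∉ (Sgamma γ n S).erase (kS γ n S) :=
    fun h => hjS (Sgamma_subset γ n S (mem_of_mem_erase h))
  refine Sgamma_eq_of_lowerClosed hγ (insert_subset hj hS)
    (insert_subset_insert j ((erase_subset _ _).trans (Sgamma_subset γ n S))) ?_ ?_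
  · rw [card_insert_of_notMem hjG, card_erase_of_mem ((mem_Sgamma_iff hS).2 ⟨hkS, le_rfl⟩), hcard]
    omega
  intro x hx y hy hyx
  have hxk : x < kS γ n S := by
    rcases mem_insert.mp hx with rfl | hx
    · exact hjk
    · exact lt_of_le_of_ne ((mem_Sgamma_iff hS).1 (mem_of_mem_erase hx)).2 (ne_of_mem_erase hx)
  rcases mem_insert.mp hy with rfl | hyS
  · exact mem_insert_self _ _
  · exact mem_insert_of_mem (mem_erase.2 ⟨by omega, (mem_Sgamma_iff hS).2 ⟨hyS, by omega⟩⟩)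

theorem Phi_eq_of_forall_sum_le {γ : ℕ} {u : ℕ → ℝ} {u0 : ℝ} (hu0 : 0 < u0) {S G : Finset ℕ}
    (hGS : G ⊆ S) (hGγ : #G ≤ γ) (hnn : ∀ i ∈ S, 0 ≤ u i)
    (hmax : ∀ S' ⊆ S, #S' ≤ γ → ∑ i ∈ S', u i ≤ ∑ i ∈ G, u i) :
    Phi γ u u0 S = (∑ i ∈ G, u i) / ((∑ i ∈ G, u i) + u0) := by
  refine le_antisymm (max'_le _ _ _ ?_) (le_max' _ _ ?_)
  · simp only [mem_image, mem_filter, mem_powerset]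
    rintro _ ⟨S', ⟨hS'S, hS'γ⟩, rfl⟩
    have hS'nn : 0 ≤ ∑ i ∈ S', u i := sum_nonneg fun i hi => hnn i (hS'S hi)
    have hGnn : 0 ≤ ∑ i ∈ G, u i := sum_nonneg fun i hi => hnn i (hGS hi)
    rw [div_le_div_iff₀ (by positivity) (by positivity)]
    nlinarith [hmax S' hS'S hS'γ]
  · exact mem_image_of_mem _ (mem_filter.mpr ⟨mem_powerset.mpr hGS, hGγ⟩)

section NonincreasingWeights

variable {n γ : ℕ} {u : ℕ → ℝ}

theorem sum_le_sum_Sgamma (hγ : 1 ≤ γ) (hn1 : u (n + 1) = 0)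
    (hmono : ∀ j ∈ Icc 1 (n + 1), ∀ k ∈ Icc 1 (n + 1), j ≤ k → u k ≤ u j)
    {S S' : Finset ℕ} (hS : S ⊆ Icc 1 n) (hS'S : S' ⊆ S) (hS'γ : #S' ≤ γ) :
    ∑ i ∈ S', u i ≤ ∑ i ∈ Sgamma γ n S, u i := by
  have hk := kS_mem_Icc hγ hS
  have hIcc : ∀ i ∈ S, i ∈ Icc 1 (n + 1) := fun i hi => Icc_subset_Icc_right n.le_succ (hS hi)
  refine sum_le_sum_of_threshold (t := u (kS γ n S)) ?_ ?_ ?_ ?_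
  · exact hn1 ▸ hmono _ hk _ (by simp) (mem_Icc.mp hk).2
  · rw [card_Sgamma hγ hS]
    exact le_min hS'γ (card_le_card hS'S)
  · intro i hi
    rw [mem_Sgamma_iff hS] at hi
    exact hmono _ (hIcc i hi.1) _ hk hi.2
  · intro i hi
    rw [mem_sdiff, mem_Sgamma_iff hS, not_and, not_le] at hi
    exact hmono _ hk _ (hIcc i (hS'S hi.1)) (hi.2 (hS'S hi.1)).le

theorem Phi_eq_sum_Sgamma (hγ : 1 ≤ γ) {u0 : ℝ} (hu0 : 0 < u0)
    (hnn : ∀ j ∈ Icc 1 n, 0 ≤ u j) (hn1 : u (n + 1) = 0)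
    (hmono : ∀ j ∈ Icc 1 (n + 1), ∀ k ∈ Icc 1 (n + 1), j ≤ k → u k ≤ u j)
    {S : Finset ℕ} (hS : S ⊆ Icc 1 n) :
    Phi γ u u0 S = (∑ i ∈ Sgamma γ n S, u i) / ((∑ i ∈ Sgamma γ n S, u i) + u0) :=
  Phi_eq_of_forall_sum_le hu0 (Sgamma_subset γ n S) (card_Sgamma hγ hS ▸ min_le_left _ _)
    (fun i hi => hnn i (hS hi)) fun _ hS'S hS'γ => sum_le_sum_Sgamma hγ hn1 hmono hS hS'S hS'γ

theorem sum_Sgamma_insert (hγ : 1 ≤ γ) (hnn : ∀ j ∈ Icc 1 n, 0 ≤ u j) (hn1 : u (n + 1) = 0)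
    (hmono : ∀ j ∈ Icc 1 (n + 1), ∀ k ∈ Icc 1 (n + 1), j ≤ k → u k ≤ u j)
    {S : Finset ℕ} (hS : S ⊆ Icc 1 n) {j : ℕ} (hj : j ∈ Icc 1 n) (hjS : j ∉ S) :
    ∑ i ∈ Sgamma γ n (insert j S), u i =
      (∑ i ∈ Sgamma γ n S, u i) + max (u j - u (kS γ n S)) 0 := by
  rcases lt_or_ge #S γ with hsmall | hlarge
  · rw [Sgamma_eq_self hγ hS hsmall.le,
      Sgamma_eq_self hγ (insert_subset hj hS) (by rw [card_insert_of_notMem hjS]; omega),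
      kS_of_card_lt n hsmall, hn1, sub_zero, max_eq_left (hnn j hj), sum_insert hjS, add_comm]
  have hkS := (kS_mem_and_card_filter n hγ hlarge).1
  have hj' : j ∈ Icc 1 (n + 1) := Icc_subset_Icc_right n.le_succ hj
  have hk' : kS γ n S ∈ Icc 1 (n + 1) := Icc_subset_Icc_right n.le_succ (hS hkS)
  rcases (show j ≠ kS γ n S from fun h => hjS (h ▸ hkS)).lt_or_gt with hjk | hkj
  · have hjG : j ∉ (Sgamma γ n S).erase (kS γ n S) :=
      fun h => hjS (Sgamma_subset γ n S (mem_of_mem_erase h))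
    rw [Sgamma_insert_of_lt_kS hγ hS hj hjS hlarge hjk, sum_insert hjG,
      sum_erase_eq_sub ((mem_Sgamma_iff hS).2 ⟨hkS, le_rfl⟩),
      max_eq_left (sub_nonneg.2 (hmono _ hj' _ hk' hjk.le))]
    ring
  · rw [Sgamma_insert_of_kS_lt hγ hS hj hjS hlarge hkj,
      max_eq_right (sub_nonpos.2 (hmono _ hk' _ hj' hkj.le)), add_zero]

end NonincreasingWeights

theorem stmt_2_general (n γ : ℕ) (hγ : 1 ≤ γ) (u : ℕ → ℝ) (u0 : ℝ) (hu0 : 0 < u0)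
    (hnn : ∀ j ∈ Finset.Icc 1 n, 0 ≤ u j) (hn1 : u (n + 1) = 0)
    (hmono : ∀ j ∈ Finset.Icc 1 (n+1), ∀ k ∈ Finset.Icc 1 (n+1), j ≤ k → u k ≤ u j)
    (S : Finset ℕ) (hS : S ⊆ Finset.Icc 1 n)
    (j : ℕ) (hj : j ∈ Finset.Icc 1 n) (hjS : j ∉ S) :
    Phi γ u u0 (S ∪ {j}) - Phi γ u u0 S =
      u0 * max (u j - u (kS γ n S)) 0 /
        (((∑ i ∈ Sgamma γ n S, u i) + max (u j - u (kS γ n S)) 0 + u0) *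
          ((∑ i ∈ Sgamma γ n S, u i) + u0)) := by
  rw [union_singleton, Phi_eq_sum_Sgamma hγ hu0 hnn hn1 hmono (insert_subset hj hS),
    Phi_eq_sum_Sgamma hγ hu0 hnn hn1 hmono hS, sum_Sgamma_insert hγ hnn hn1 hmono hS hj hjS]
  have hm : 0 ≤ ∑ i ∈ Sgamma γ n S, u i :=
    sum_nonneg fun i hi => hnn i (hS (Sgamma_subset γ n S hi))
  have hd : 0 ≤ max (u j - u (kS γ n S)) 0 := le_max_right _ _
  field_simp
  ring

/-- closed formula for the marginal gain
`ρ_j(S) = Φ(S∪{j}) − Φ(S) = u₀(u_j − u_{k_S})⁺ / ((u(S^γ)+(u_j−u_{k_S})⁺+u₀)(u(S^γ)+u₀))`. -/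
theorem stmt_2 (n γ : ℕ) (hγ : 1 ≤ γ) (u : ℕ → ℝ) (u0 : ℝ) (hu0 : 0 < u0)
    (hnn : ∀ j ∈ Finset.Icc 1 n, 0 ≤ u j) (hn1 : u (n + 1) = 0)
    (hmono : ∀ j ∈ Finset.Icc 1 (n+1), ∀ k ∈ Finset.Icc 1 (n+1), j ≤ k → u k ≤ u j)
    (S : Finset ℕ) (hS : S ⊆ Finset.Icc 1 n) (hSne : S ≠ Finset.Icc 1 n)
    (j : ℕ) (hj : j ∈ Finset.Icc 1 n) (hjS : j ∉ S) :
    Phi γ u u0 (S ∪ {j}) - Phi γ u u0 S =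
      u0 * max (u j - u (kS γ n S)) 0 /
        (((∑ i ∈ Sgamma γ n S, u i) + max (u j - u (kS γ n S)) 0 + u0) *
          ((∑ i ∈ Sgamma γ n S, u i) + u0)) :=
  stmt_2_general n γ hγ u u0 hu0 hnn hn1 hmono S hS j hj hjS
end

section
/- Let Φ be submodular on 2^[n] with marginals ρ_j(T) = Φ(T∪{j}) − Φ(T), and X = {(w,x) ∈ ℝ × {0,1}^n : w ≤ Φ(S^x)}. For every S ⊆ [n], the inequality w ≤ Φ(S) + ∑_{j∉S} ρ_j(∅) x_j − ∑_{j∈S} ρ_j(S\{j})(1 − x_j) is valid for X. -/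
open Finset

lemma stmt7_addA (n : ℕ) (Φ : Finset ℕ → ℝ)
    (hsub : ∀ S T : Finset ℕ, S ⊆ T → T ⊆ Finset.Icc 1 n → ∀ j ∈ Finset.Icc 1 n, j ∉ T →
      Φ (insert j T) - Φ T ≤ Φ (insert j S) - Φ S)
    (C : Finset ℕ) :
    ∀ A : Finset ℕ, Disjoint C A → C ∪ A ⊆ Finset.Icc 1 n →
      Φ (C ∪ A) - Φ C ≤ ∑ j ∈ A, (Φ (insert j ∅) - Φ ∅) := by
  intro A
  induction A using Finset.induction_on with
  | empty => simp
  | @insert a A' ha ih =>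
    intro hdisj hsubset
    have haIcc : a ∈ Finset.Icc 1 n := hsubset (by simp)
    have h1 : C ∪ insert a A' = insert a (C ∪ A') := by
      ext j; simp [or_comm, or_left_comm]
    have hanotin : a ∉ C ∪ A' := by
      simp only [Finset.mem_union, not_or]
      exact ⟨fun h => (Finset.disjoint_left.mp hdisj h (by simp)), ha⟩
    have hsub2 : C ∪ A' ⊆ Finset.Icc 1 n := by
      refine Finset.Subset.trans ?_ hsubset
      exact Finset.union_subset_union_right (Finset.subset_insert _ _)
    have key := hsub ∅ (C ∪ A') (Finset.empty_subset _) hsub2 a haIcc hanotin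
    have ih' := ih (hdisj.mono_right (Finset.subset_insert _ _)) hsub2
    rw [Finset.sum_insert ha, h1]
    linarith

lemma stmt7_remB (n : ℕ) (Φ : Finset ℕ → ℝ)
    (hsub : ∀ S T : Finset ℕ, S ⊆ T → T ⊆ Finset.Icc 1 n → ∀ j ∈ Finset.Icc 1 n, j ∉ T →
      Φ (insert j T) - Φ T ≤ Φ (insert j S) - Φ S)
    (S : Finset ℕ) (hS : S ⊆ Finset.Icc 1 n) :
    ∀ B : Finset ℕ, B ⊆ S →
      ∑ j ∈ B, (Φ S - Φ (S.erase j)) ≤ Φ S - Φ (S \ B) := by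
  intro B
  induction B using Finset.induction_on with
  | empty => simp
  | @insert a B' ha ih =>
    intro hBS
    have haS : a ∈ S := hBS (by simp)
    have haIcc : a ∈ Finset.Icc 1 n := hS haS
    have hB'S : B' ⊆ S := (Finset.subset_insert _ _).trans hBS
    have ih' := ih hB'S
    have hsd : S \ insert a B' = (S \ B').erase a := by
      ext j
      simp only [Finset.mem_sdiff, Finset.mem_erase, Finset.mem_insert, not_or]
      tauto
    have hsmall : (S \ B').erase a ⊆ S.erase a :=
      Finset.erase_subset_erase _ (Finset.sdiff_subset)
    have hIcc2 : S.erase a ⊆ Finset.Icc 1 n := (Finset.erase_subset _ _).trans hS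
    have key := hsub ((S \ B').erase a) (S.erase a) hsmall hIcc2 a haIcc
      (Finset.notMem_erase _ _)
    have e1 : insert a (S.erase a) = S := Finset.insert_erase haS
    have e2 : insert a ((S \ B').erase a) = S \ B' := by
      apply Finset.insert_erase
      simp [Finset.mem_sdiff, haS, ha]
    rw [e1, e2] at key
    rw [Finset.sum_insert ha, hsd]
    linarith

/-- validity of the second family of submodular inequalities for a general
submodular `Φ` on subsets of `[n]`:
`w ≤ Φ(S) + ∑_{j∉S} ρ_j(∅) x_j − ∑_{j∈S} ρ_j(S\{j}) (1−x_j)`. -/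
theorem stmt_7 (n : ℕ) (Φ : Finset ℕ → ℝ)
    (hsub : ∀ S T : Finset ℕ, S ⊆ T → T ⊆ Finset.Icc 1 n → ∀ j ∈ Finset.Icc 1 n, j ∉ T →
      Φ (insert j T) - Φ T ≤ Φ (insert j S) - Φ S)
    (S : Finset ℕ) (hS : S ⊆ Finset.Icc 1 n)
    (w : ℝ) (x : ℕ → ℝ) (hx : ∀ j ∈ Finset.Icc 1 n, x j = 0 ∨ x j = 1)
    (hw : w ≤ Φ ((Finset.Icc 1 n).filter fun j => x j = 1)) :
    w ≤ Φ S
      + ∑ j ∈ Finset.Icc 1 n \ S, (Φ (insert j ∅) - Φ ∅) * x j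
      - ∑ j ∈ S, (Φ S - Φ (S.erase j)) * (1 - x j) := by
  set T := (Finset.Icc 1 n).filter (fun j => x j = 1) with hTdef
  have hT : T ⊆ Finset.Icc 1 n := Finset.filter_subset _ _
  -- sum 1
  have hsum1 : ∑ j ∈ Finset.Icc 1 n \ S, (Φ (insert j ∅) - Φ ∅) * x j
      = ∑ j ∈ T \ S, (Φ (insert j ∅) - Φ ∅) := by
    have hset : T \ S = (Finset.Icc 1 n \ S).filter (fun j => x j = 1) := by
      ext j; simp [hTdef, Finset.mem_sdiff, Finset.mem_filter]; tauto
    rw [hset, Finset.sum_filter]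
    apply Finset.sum_congr rfl
    intro j hj
    rcases hx j (Finset.mem_sdiff.mp hj).1 with h | h <;> simp [h]
  -- sum 2
  have hsum2 : ∑ j ∈ S, (Φ S - Φ (S.erase j)) * (1 - x j)
      = ∑ j ∈ S \ T, (Φ S - Φ (S.erase j)) := by
    have hset : S \ T = S.filter (fun j => ¬ x j = 1) := by
      ext j
      simp only [hTdef, Finset.mem_sdiff, Finset.mem_filter, and_congr_right_iff, not_and]
      intro hjS
      constructor
      · intro h; exact h (hS hjS)
      · intro h _; exact h
    rw [hset, Finset.sum_filter]
    apply Finset.sum_congr rfl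
    intro j hj
    rcases hx j (hS hj) with h | h <;> simp [h]
  have hdisj : Disjoint (S ∩ T) (T \ S) := by
    rw [Finset.disjoint_left]
    intro j hj1 hj2
    exact (Finset.mem_sdiff.mp hj2).2 (Finset.mem_inter.mp hj1).1
  have hcup : (S ∩ T) ∪ (T \ S) = T := by
    ext j; simp [Finset.mem_union, Finset.mem_inter, Finset.mem_sdiff]; tauto
  have hA := stmt7_addA n Φ hsub (S ∩ T) (T \ S) hdisj (by rw [hcup]; exact hT)
  rw [hcup] at hA
  have hB := stmt7_remB n Φ hsub S hS (S \ T) (Finset.sdiff_subset)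
  have hsd : S \ (S \ T) = S ∩ T := Finset.sdiff_sdiff_self_left _ _
  rw [hsd] at hB
  rw [hsum1, hsum2]
  linarith
end

section
/- With u sorted nonincreasingly, u₀ > 0, γ ≥ 1, and S = {j₁ < ... < j_s} ⊆ [n] with s ≥ γ + 1, define S̄^γ = S ∪ {j_{γ+1}, j_{γ+1}+1, ..., n}. Then the right-hand side of the submodular inequality w ≤ Φ(S̄^γ) − ∑_{j∈S̄^γ} ρ_j(S̄^γ\{j})(1−x_j) + ∑_{j∉S̄^γ} ρ_j(∅)x_j is pointwise (over x ∈ {0,1}^n) at most the right-hand side of w ≤ Φ(S) − ∑_{j∈S} ρ_j(S\{j})(1−x_j) + ∑_{j∉S} ρ_j(∅)x_j; i.e., the S̄^γ-inequality dominates the S-inequality. -/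
open Finset

/-!
Let `m = j_{γ+1}` and let `A` be the `γ` elements of `S` below `m`. As `u` is nonincreasing, `Φ(T)`
equals `u(A)/(u(A)+u₀)` for every `T ⊇ A` whose other elements are all `≥ m`, so adding indices
`≥ m` to a set with such a base does not change `Φ`. Deleting one element of `S` still leaves
such a base (with `m` replacing a deleted element of `A`). Hence `Φ(S̄^γ) = Φ(S)`, the marginals
`ρ_j` on `S` coincide for `S` and `S̄^γ`, those of `S̄^γ \ S` vanish, and the last sum only loses
nonnegative terms.
-/

theorem Finset.sort_getD_mem_and_card_filter_lt (S : Finset ℕ) {k : ℕ} (hk : k < #S) :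
    (S.sort (· ≤ ·)).getD k 0 ∈ S ∧ #{x ∈ S | x < (S.sort (· ≤ ·)).getD k 0} = k := by
  have hf : (Set.ofPred (· ∈ S)).Finite := S.finite_toSet
  have hfS : hf.toFinset = S := by ext; simp
  have hk' : k < #hf.toFinset := by rwa [hfS]
  rw [← hfS, ← Nat.nth_eq_getD_sort hf, hfS]
  refine ⟨Nat.nth_mem_of_lt_card hf hk', .trans ?_ (Nat.count_nth_of_lt_card_finite hf hk')⟩
  rw [Nat.count_eq_card_filter_range]
  congr 1
  ext x
  simp only [mem_filter, mem_range]
  tauto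

theorem Finset.sum_le_sum_of_card_le_of_threshold {ι M : Type*} [DecidableEq ι]
    [AddCommMonoid M] [LinearOrder M] [IsOrderedAddMonoid M] {A B : Finset ι} {u : ι → M} {c : M}
    (hcard : #B ≤ #A) (hc : 0 ≤ c)
    (hB : ∀ b ∈ B \ A, u b ≤ c) (hA : ∀ a ∈ A \ B, c ≤ u a) :
    ∑ b ∈ B, u b ≤ ∑ a ∈ A, u a := by
  have hsdiff : #(B \ A) ≤ #(A \ B) := by
    have := card_sdiff_add_card_inter B A
    have := card_sdiff_add_card_inter A B
    rw [inter_comm] at this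
    omega
  calc ∑ b ∈ B, u b
      = ∑ b ∈ B ∩ A, u b + ∑ b ∈ B \ A, u b := (sum_inter_add_sum_sdiff _ _ _).symm
    _ ≤ ∑ a ∈ A ∩ B, u a + #(B \ A) • c := by
        rw [inter_comm]; gcongr; exact sum_le_card_nsmul _ _ _ hB
    _ ≤ ∑ a ∈ A ∩ B, u a + #(A \ B) • c := by gcongr
    _ ≤ ∑ a ∈ A ∩ B, u a + ∑ a ∈ A \ B, u a := by gcongr; exact card_nsmul_le_sum _ _ _ hA
    _ = ∑ a ∈ A, u a := sum_inter_add_sum_sdiff _ _ _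

theorem div_add_le_div_add_of_le {a b c : ℝ} (hc : 0 < c) (ha : 0 ≤ a) (hab : a ≤ b) :
    a / (a + c) ≤ b / (b + c) := by
  rw [div_le_div_iff₀ (by linarith) (by linarith)]
  nlinarith

section Phi

variable {γ : ℕ} {u : ℕ → ℝ} {u0 : ℝ}

theorem Phi_nonneg (T : Finset ℕ) : 0 ≤ Phi γ u u0 T :=
  le_max' _ _ <| mem_image.mpr ⟨∅, mem_filter.mpr ⟨empty_mem_powerset T, by simp⟩, by simp⟩

theorem Phi_empty : Phi γ u u0 ∅ = 0 := by
  refine le_antisymm (max'_le _ _ _ ?_) (Phi_nonneg _)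
  simp

theorem Phi_eq_of_threshold (hu0 : 0 < u0) {T A : Finset ℕ} {c : ℝ} (hnn : ∀ j ∈ T, 0 ≤ u j)
    (hAT : A ⊆ T) (hA : #A = γ) (hc : 0 ≤ c) (hAc : ∀ a ∈ A, c ≤ u a)
    (hTc : ∀ t ∈ T \ A, u t ≤ c) :
    Phi γ u u0 T = (∑ j ∈ A, u j) / ((∑ j ∈ A, u j) + u0) := by
  refine le_antisymm (max'_le _ _ _ ?_) (le_max' _ _ ?_)
  · simp only [mem_image, mem_filter, mem_powerset]
    rintro _ ⟨S', ⟨hS'T, hS'⟩, rfl⟩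
    refine div_add_le_div_add_of_le hu0 (sum_nonneg fun j hj => hnn j (hS'T hj)) ?_
    exact sum_le_sum_of_card_le_of_threshold (hA ▸ hS') hc
      (fun b hb => hTc b (sdiff_subset_sdiff hS'T le_rfl hb))
      (fun a ha => hAc a (mem_sdiff.mp ha).1)
  · exact mem_image.mpr ⟨A, mem_filter.mpr ⟨mem_powerset.mpr hAT, hA.le⟩, rfl⟩

variable {n m : ℕ}

theorem Phi_eq_of_le_of_ge (hu0 : 0 < u0) (hnn : ∀ j ∈ Icc 1 n, 0 ≤ u j)
    (hmono : ∀ j ∈ Icc 1 n, ∀ k ∈ Icc 1 n, j ≤ k → u k ≤ u j) (hm : m ∈ Icc 1 n)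
    {T A : Finset ℕ} (hT : T ⊆ Icc 1 n) (hAT : A ⊆ T) (hA : #A = γ) (hAm : ∀ a ∈ A, a ≤ m)
    (hTm : ∀ t ∈ T \ A, m ≤ t) :
    Phi γ u u0 T = (∑ j ∈ A, u j) / ((∑ j ∈ A, u j) + u0) :=
  Phi_eq_of_threshold hu0 (fun j hj => hnn j (hT hj)) hAT hA (hnn m hm)
    (fun a ha => hmono a (hT (hAT ha)) m hm (hAm a ha))
    (fun t ht => hmono m hm t (hT (mem_sdiff.mp ht).1) (hTm t ht))

theorem Phi_union_eq (hu0 : 0 < u0) (hnn : ∀ j ∈ Icc 1 n, 0 ≤ u j)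
    (hmono : ∀ j ∈ Icc 1 n, ∀ k ∈ Icc 1 n, j ≤ k → u k ≤ u j) (hm : m ∈ Icc 1 n)
    {T U A : Finset ℕ} (hT : T ⊆ Icc 1 n) (hU : U ⊆ Icc m n) (hAT : A ⊆ T) (hA : #A = γ)
    (hAm : ∀ a ∈ A, a ≤ m) (hTm : ∀ t ∈ T \ A, m ≤ t) :
    Phi γ u u0 (T ∪ U) = Phi γ u u0 T := by
  have hU1 : U ⊆ Icc 1 n := hU.trans (Icc_subset_Icc (mem_Icc.mp hm).1 le_rfl)
  have hTUm : ∀ t ∈ (T ∪ U) \ A, m ≤ t := by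
    simp only [mem_sdiff, mem_union]
    rintro t ⟨ht | ht, htA⟩
    exacts [hTm t (mem_sdiff.mpr ⟨ht, htA⟩), (mem_Icc.mp (hU ht)).1]
  rw [Phi_eq_of_le_of_ge hu0 hnn hmono hm (union_subset hT hU1) (hAT.trans subset_union_left)
    hA hAm hTUm, Phi_eq_of_le_of_ge hu0 hnn hmono hm hT hAT hA hAm hTm]

theorem sum_sdiff_Phi_singleton_mul_le {I S S' : Finset ℕ} {x : ℕ → ℝ} (hSS' : S ⊆ S')
    (hx : ∀ j ∈ I, 0 ≤ x j) :
    ∑ j ∈ I \ S', (Phi γ u u0 {j} - Phi γ u u0 ∅) * x j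
      ≤ ∑ j ∈ I \ S, (Phi γ u u0 {j} - Phi γ u u0 ∅) * x j :=
  sum_le_sum_of_subset_of_nonneg (sdiff_subset_sdiff le_rfl hSS') fun j hj _ =>
    mul_nonneg (by simpa [Phi_empty] using Phi_nonneg {j}) (hx j (mem_sdiff.mp hj).1)

end Phi

theorem exists_subset_erase_le_of_ge {S A : Finset ℕ} {m γ : ℕ} (hmS : m ∈ S) (hAS : A ⊆ S)
    (hA : #A = γ) (hAm : ∀ a ∈ A, a < m) (hSm : ∀ t ∈ S \ A, m ≤ t) (j : ℕ) :
    ∃ B ⊆ S.erase j, #B = γ ∧ (∀ b ∈ B, b ≤ m) ∧ ∀ t ∈ S.erase j \ B, m ≤ t := by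
  by_cases hjA : j ∈ A
  · have hmA : m ∉ A.erase j := fun h => (hAm m (mem_of_mem_erase h)).false
    refine ⟨insert m (A.erase j), ?_, ?_, ?_, ?_⟩
    · grind
    · rw [card_insert_of_notMem hmA, card_erase_of_mem hjA, hA]
      have := card_pos.mpr ⟨j, hjA⟩
      omega
    · grind
    · exact fun t ht => hSm t (by grind)
  · refine ⟨A, ?_, hA, fun a ha => (hAm a ha).le, ?_⟩
    · grind
    · exact fun t ht => hSm t (by grind)

theorem sum_sub_erase_mul_eq_of_subset {α : Type*} [DecidableEq α] {F : Finset α → ℝ}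
    {S S' : Finset α} (w : α → ℝ) (hSS' : S ⊆ S') (hF : F S' = F S)
    (hmem : ∀ j ∈ S, F (S'.erase j) = F (S.erase j))
    (hnotMem : ∀ j ∈ S', j ∉ S → F (S'.erase j) = F S') :
    ∑ j ∈ S', (F S' - F (S'.erase j)) * w j = ∑ j ∈ S, (F S - F (S.erase j)) * w j := by
  rw [← sum_subset hSS' fun j hj hjS => by rw [hnotMem j hj hjS, sub_self, zero_mul]]
  exact sum_congr rfl fun j hj => by rw [hF, hmem j hj]

theorem stmt_9_general (n γ : ℕ) (u : ℕ → ℝ) (u0 : ℝ) (hu0 : 0 < u0)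
    (hnn : ∀ j ∈ Finset.Icc 1 n, 0 ≤ u j)
    (hmono : ∀ j ∈ Finset.Icc 1 n, ∀ k ∈ Finset.Icc 1 n, j ≤ k → u k ≤ u j)
    (S : Finset ℕ) (hS : S ⊆ Finset.Icc 1 n) (hcard : γ + 1 ≤ S.card)
    (Sbar : Finset ℕ) (hSbar : Sbar = S ∪ Finset.Icc ((S.sort (· ≤ ·)).getD γ 0) n)
    (x : ℕ → ℝ) (hx : ∀ j ∈ Finset.Icc 1 n, x j = 0 ∨ x j = 1) :
    Phi γ u u0 Sbar - (∑ j ∈ Sbar, (Phi γ u u0 Sbar - Phi γ u u0 (Sbar.erase j)) * (1 - x j))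
        + ∑ j ∈ Finset.Icc 1 n \ Sbar, (Phi γ u u0 {j} - Phi γ u u0 ∅) * x j
      ≤ Phi γ u u0 S - (∑ j ∈ S, (Phi γ u u0 S - Phi γ u u0 (S.erase j)) * (1 - x j))
        + ∑ j ∈ Finset.Icc 1 n \ S, (Phi γ u u0 {j} - Phi γ u u0 ∅) * x j := by
  set m := (S.sort (· ≤ ·)).getD γ 0
  obtain ⟨hmS, hA⟩ := S.sort_getD_mem_and_card_filter_lt (k := γ) (by omega)
  set A := S.filter (· < m)
  have hAS : A ⊆ S := filter_subset _ _
  have hAm : ∀ a ∈ A, a < m := fun a ha => (mem_filter.mp ha).2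
  have hSm : ∀ t ∈ S \ A, m ≤ t := fun t ht => by grind
  have hm := hS hmS
  have hSSbar : S ⊆ Sbar := hSbar ▸ subset_union_left
  have hPhi : Phi γ u u0 Sbar = Phi γ u u0 S :=
    hSbar ▸ Phi_union_eq hu0 hnn hmono hm hS le_rfl hAS hA (fun a ha => (hAm a ha).le) hSm
  have hmem : ∀ j ∈ S, Phi γ u u0 (Sbar.erase j) = Phi γ u u0 (S.erase j) := by
    intro j _
    obtain ⟨B, hBS, hB, hBm, hSBm⟩ := exists_subset_erase_le_of_ge hmS hAS hA hAm hSm j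
    rw [hSbar, erase_union_distrib]
    exact Phi_union_eq hu0 hnn hmono hm ((erase_subset _ _).trans hS) (erase_subset _ _)
      hBS hB hBm hSBm
  have hnotMem : ∀ j ∈ Sbar, j ∉ S → Phi γ u u0 (Sbar.erase j) = Phi γ u u0 Sbar := by
    intro j _ hjS
    rw [hPhi, hSbar, erase_union_distrib, erase_eq_of_notMem hjS]
    exact Phi_union_eq hu0 hnn hmono hm hS (erase_subset _ _) hAS hA
      (fun a ha => (hAm a ha).le) hSm
  have hx0 : ∀ j ∈ Icc 1 n, 0 ≤ x j := fun j hj => by rcases hx j hj with h | h <;> simp [h]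
  rw [sum_sub_erase_mul_eq_of_subset _ hSSbar hPhi hmem hnotMem, hPhi]
  linarith [sum_sdiff_Phi_singleton_mul_le (γ := γ) (u := u) (u0 := u0) hSSbar hx0]

/-- with `S̄^γ = S ∪ {j_{γ+1}, j_{γ+1}+1, …, n}` (where `j_{γ+1}` is the
`(γ+1)`-th smallest element of `S`), the right-hand side of the `S̄^γ`-submodular inequality
(second family) is pointwise, over 0-1 vectors `x`, at most that of the `S`-inequality. -/
theorem stmt_9 (n γ : ℕ) (hγ : 1 ≤ γ) (u : ℕ → ℝ) (u0 : ℝ) (hu0 : 0 < u0)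
    (hnn : ∀ j ∈ Finset.Icc 1 n, 0 ≤ u j)
    (hmono : ∀ j ∈ Finset.Icc 1 n, ∀ k ∈ Finset.Icc 1 n, j ≤ k → u k ≤ u j)
    (S : Finset ℕ) (hS : S ⊆ Finset.Icc 1 n) (hcard : γ + 1 ≤ S.card)
    (Sbar : Finset ℕ) (hSbar : Sbar = S ∪ Finset.Icc ((S.sort (· ≤ ·)).getD γ 0) n)
    (x : ℕ → ℝ) (hx : ∀ j ∈ Finset.Icc 1 n, x j = 0 ∨ x j = 1) :
    Phi γ u u0 Sbar - (∑ j ∈ Sbar, (Phi γ u u0 Sbar - Phi γ u u0 (Sbar.erase j)) * (1 - x j))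
        + ∑ j ∈ Finset.Icc 1 n \ Sbar, (Phi γ u u0 {j} - Phi γ u u0 ∅) * x j
      ≤ Phi γ u u0 S - (∑ j ∈ S, (Phi γ u u0 S - Phi γ u u0 (S.erase j)) * (1 - x j))
        + ∑ j ∈ Finset.Icc 1 n \ S, (Phi γ u u0 {j} - Phi γ u u0 ∅) * x j :=
  stmt_9_general n γ u u0 hu0 hnn hmono S hS hcard Sbar hSbar x hx
end

section
/- Let γ = 1, u₀ > 0, u₁ ≥ u₂ ≥ ... ≥ uₙ ≥ u_{n+1} := 0, and for x ∈ [0,1]^n and ℓ ∈ [n] define f_ℓ(x) = u_{ℓ+1}/(u_{ℓ+1}+u₀) + ∑_{j=1}^{ℓ} ( u_j/(u_j+u₀) − u_{ℓ+1}/(u_{ℓ+1}+u₀) ) x_j. For x* ∈ [0,1]^n define k(x*) = 1 if x*₁ = 1, and k(x*) = max{ ℓ ∈ [n] : ∑_{j=1}^{ℓ} x*_j < 1 } otherwise. Then f_{k(x*)}(x*) = min{ f_ℓ(x*) : ℓ ∈ [n] }. -/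
open Finset

/-- with `γ = 1`, `f_{k(x)}(x) = min { f_ℓ(x) : ℓ ∈ [n] }`, where
`f_ℓ(x) = u_{ℓ+1}/(u_{ℓ+1}+u₀) + ∑_{j=1}^{ℓ} (u_j/(u_j+u₀) − u_{ℓ+1}/(u_{ℓ+1}+u₀)) x_j`
and `k(x) = 1` if `x₁ = 1`, else `k(x) = max{ℓ ∈ [n] : ∑_{j≤ℓ} x_j < 1}`. -/
theorem stmt_10 (n : ℕ) (hn : 1 ≤ n) (u : ℕ → ℝ) (u0 : ℝ) (hu0 : 0 < u0)
    (hnn : ∀ j ∈ Finset.Icc 1 n, 0 ≤ u j) (hn1 : u (n + 1) = 0)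
    (hmono : ∀ j ∈ Finset.Icc 1 (n+1), ∀ k ∈ Finset.Icc 1 (n+1), j ≤ k → u k ≤ u j)
    (x : ℕ → ℝ) (hx : ∀ j ∈ Finset.Icc 1 n, 0 ≤ x j ∧ x j ≤ 1)
    (f : ℕ → ℝ)
    (hf : ∀ ℓ, f ℓ = u (ℓ+1) / (u (ℓ+1) + u0)
      + ∑ j ∈ Finset.Icc 1 ℓ, (u j / (u j + u0) - u (ℓ+1) / (u (ℓ+1) + u0)) * x j)
    (k : ℕ)
    (hk : (x 1 = 1 ∧ k = 1) ∨
      (x 1 ≠ 1 ∧ k ∈ Finset.Icc 1 n ∧ (∑ j ∈ Finset.Icc 1 k, x j) < 1 ∧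
        ∀ ℓ ∈ Finset.Icc 1 n, (∑ j ∈ Finset.Icc 1 ℓ, x j) < 1 → ℓ ≤ k)) :
    k ∈ Finset.Icc 1 n ∧ ∀ ℓ ∈ Finset.Icc 1 n, f k ≤ f ℓ := by
  have hpos : ∀ j, 1 ≤ j → j ≤ n + 1 → 0 ≤ u j := by
    intro j h1 h2
    rcases eq_or_lt_of_le h2 with h | h
    · rw [h, hn1]
    · exact hnn j (Finset.mem_Icc.mpr ⟨h1, by omega⟩)
  have hden : ∀ j, 1 ≤ j → j ≤ n + 1 → 0 < u j + u0 := by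
    intro j h1 h2; linarith [hpos j h1 h2]
  have cmono : ∀ m, 1 ≤ m → m + 1 ≤ n + 1 →
      u (m+1) / (u (m+1) + u0) ≤ u m / (u m + u0) := by
    intro m h1 h2
    have hm := hden m h1 (by omega)
    have hm1 := hden (m+1) (by omega) h2
    rw [div_le_div_iff₀ hm1 hm]
    have hle : u (m+1) ≤ u m :=
      hmono m (Finset.mem_Icc.mpr ⟨h1, by omega⟩) (m+1)
        (Finset.mem_Icc.mpr ⟨by omega, h2⟩) (by omega)
    nlinarith [hpos (m+1) (by omega) h2]
  have hxnn : ∀ j, 1 ≤ j → j ≤ n → 0 ≤ x j := fun j h1 h2 =>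
    (hx j (Finset.mem_Icc.mpr ⟨h1, h2⟩)).1
  have step : ∀ m, f (m+1) - f m =
      (u (m+1) / (u (m+1) + u0) - u (m+2) / (u (m+2) + u0)) *
        ((∑ j ∈ Finset.Icc 1 (m+1), x j) - 1) := by
    intro m
    rw [hf, hf, Finset.sum_Icc_succ_top (by omega : 1 ≤ m + 1),
      Finset.sum_Icc_succ_top (by omega : 1 ≤ m + 1)]
    have key : (∑ j ∈ Finset.Icc 1 m, (u j / (u j + u0) - u (m+1+1) / (u (m+1+1) + u0)) * x j)
        - (∑ j ∈ Finset.Icc 1 m, (u j / (u j + u0) - u (m+1) / (u (m+1) + u0)) * x j)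
        = (u (m+1) / (u (m+1) + u0) - u (m+1+1) / (u (m+1+1) + u0)) *
            ∑ j ∈ Finset.Icc 1 m, x j := by
      rw [← Finset.sum_sub_distrib, Finset.mul_sum]
      exact Finset.sum_congr rfl fun j _ => by ring
    have h22 : m + 1 + 1 = m + 2 := rfl
    rw [h22] at key
    linear_combination key
  have Smono : ∀ a b, a ≤ b → b ≤ n →
      (∑ j ∈ Finset.Icc 1 a, x j) ≤ ∑ j ∈ Finset.Icc 1 b, x j := by
    intro a b hab hbn
    apply Finset.sum_le_sum_of_subset_of_nonneg (Finset.Icc_subset_Icc_right hab)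
    intro j hj _
    have hj' := Finset.mem_Icc.mp hj
    exact hxnn j hj'.1 (hj'.2.trans hbn)
  -- extract shared facts from the case split
  have hmain : 1 ≤ k ∧ k ≤ n ∧
      (∀ ℓ, 1 ≤ ℓ → ℓ + 1 ≤ k → (∑ j ∈ Finset.Icc 1 (ℓ+1), x j) < 1) ∧
      (∀ ℓ, k ≤ ℓ → ℓ + 1 ≤ n → 1 ≤ ∑ j ∈ Finset.Icc 1 (ℓ+1), x j) := by
    rcases hk with ⟨hx1, hk1⟩ | ⟨_, hkm, hSk, hmax⟩
    · subst hk1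
      refine ⟨le_refl 1, hn, fun ℓ h1 h2 => by omega, fun ℓ h1 h2 => ?_⟩
      have : x 1 ≤ ∑ j ∈ Finset.Icc 1 (ℓ+1), x j := by
        apply Finset.single_le_sum (f := x)
        · intro j hj
          have hj' := Finset.mem_Icc.mp hj
          exact hxnn j hj'.1 (by omega)
        · exact Finset.mem_Icc.mpr ⟨le_refl 1, by omega⟩
      linarith [hx1 ▸ this]
    · have hkm' := Finset.mem_Icc.mp hkm
      refine ⟨hkm'.1, hkm'.2, fun ℓ h1 h2 => ?_, fun ℓ h1 h2 => ?_⟩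
      · calc (∑ j ∈ Finset.Icc 1 (ℓ+1), x j) ≤ ∑ j ∈ Finset.Icc 1 k, x j :=
              Smono _ _ h2 hkm'.2
          _ < 1 := hSk
      · by_contra h
        push_neg at h
        have := hmax (ℓ+1) (Finset.mem_Icc.mpr ⟨by omega, h2⟩) h
        omega
  obtain ⟨hk1, hkn, hA, hB⟩ := hmain
  refine ⟨Finset.mem_Icc.mpr ⟨hk1, hkn⟩, ?_⟩
  have down : ∀ d ℓ, ℓ + d = k → 1 ≤ ℓ → f k ≤ f ℓ := by
    intro d
    induction d with
    | zero =>
      intro ℓ h _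
      have : ℓ = k := by omega
      rw [this]
    | succ d ih =>
      intro ℓ h h1
      have hle := ih (ℓ+1) (by omega) (by omega)
      have hs := step ℓ
      have hS := hA ℓ h1 (by omega)
      have hc : 0 ≤ u (ℓ+1) / (u (ℓ+1) + u0) - u (ℓ+2) / (u (ℓ+2) + u0) := by
        have := cmono (ℓ+1) (by omega) (by omega); linarith
      have hnp : (u (ℓ+1) / (u (ℓ+1) + u0) - u (ℓ+2) / (u (ℓ+2) + u0)) *
          ((∑ j ∈ Finset.Icc 1 (ℓ+1), x j) - 1) ≤ 0 :=
        mul_nonpos_of_nonneg_of_nonpos hc (by linarith)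
      linarith
  have up : ∀ ℓ, k ≤ ℓ → ℓ ≤ n → f k ≤ f ℓ := by
    intro ℓ hkℓ
    induction ℓ, hkℓ using Nat.le_induction with
    | base => intro _; exact le_refl _
    | succ ℓ hkℓ ih =>
      intro hℓn
      have hle := ih (by omega)
      have hs := step ℓ
      have hS := hB ℓ hkℓ hℓn
      have hc : 0 ≤ u (ℓ+1) / (u (ℓ+1) + u0) - u (ℓ+2) / (u (ℓ+2) + u0) := by
        have := cmono (ℓ+1) (by omega) (by omega); linarith
      have hnn' : 0 ≤ (u (ℓ+1) / (u (ℓ+1) + u0) - u (ℓ+2) / (u (ℓ+2) + u0)) *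
          ((∑ j ∈ Finset.Icc 1 (ℓ+1), x j) - 1) :=
        mul_nonneg hc (by linarith)
      linarith
  intro ℓ hℓ
  have hℓ' := Finset.mem_Icc.mp hℓ
  rcases le_or_gt ℓ k with h | h
  · exact down (k - ℓ) ℓ (by omega) hℓ'.1
  · exact up ℓ (le_of_lt h) hℓ'.2
end

section
/- Let γ = 1 and u₀ > 0 with u₁ ≥ ... ≥ uₙ ≥ 0. Every integral point (w, x) with x ∈ {0,1}^n and w ≤ max_{j: x_j = 1} u_j/(u_j+u₀) (w ≤ 0 if x = 0) satisfies, for each ℓ ∈ [n], the inequality w ≤ u_{ℓ+1}/(u_{ℓ+1}+u₀) + ∑_{j=1}^{ℓ} ( u_j/(u_j+u₀) − u_{ℓ+1}/(u_{ℓ+1}+u₀) ) x_j, where u_{n+1} := 0. -/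
open Finset

/-- validity of the singleton submodular inequalities for `γ = 1`: every
0-1 point `(w,x)` with `w ≤ Φ(Sˣ)` satisfies, for each `ℓ ∈ [n]`,
`w ≤ u_{ℓ+1}/(u_{ℓ+1}+u₀) + ∑_{j=1}^{ℓ} (u_j/(u_j+u₀) − u_{ℓ+1}/(u_{ℓ+1}+u₀)) x_j`. -/
theorem stmt_12 (n : ℕ) (u : ℕ → ℝ) (u0 : ℝ) (hu0 : 0 < u0)
    (hnn : ∀ j ∈ Finset.Icc 1 n, 0 ≤ u j) (hn1 : u (n + 1) = 0)
    (hmono : ∀ j ∈ Finset.Icc 1 (n+1), ∀ k ∈ Finset.Icc 1 (n+1), j ≤ k → u k ≤ u j)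
    (w : ℝ) (x : ℕ → ℝ) (hx : ∀ j ∈ Finset.Icc 1 n, x j = 0 ∨ x j = 1)
    (hw : w ≤ Phi 1 u u0 ((Finset.Icc 1 n).filter fun j => x j = 1)) :
    ∀ ℓ ∈ Finset.Icc 1 n,
      w ≤ u (ℓ+1) / (u (ℓ+1) + u0) +
        ∑ j ∈ Finset.Icc 1 ℓ, (u j / (u j + u0) - u (ℓ+1) / (u (ℓ+1) + u0)) * x j := by
  intro ℓ hℓ
  rw [Finset.mem_Icc] at hℓ
  -- nonnegativity of u on Icc 1 (n+1)
  have hnn' : ∀ j ∈ Finset.Icc 1 (n+1), 0 ≤ u j := by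
    intro j hj
    have := hmono j hj (n+1) (by simp) (Finset.mem_Icc.mp hj).2
    rw [hn1] at this; exact this
  -- monotonicity of t ↦ t/(t+u0)
  have hf : ∀ a b : ℝ, 0 ≤ a → a ≤ b → a / (a + u0) ≤ b / (b + u0) := by
    intro a b ha hab
    rw [div_le_div_iff₀ (by linarith) (by linarith)]
    nlinarith
  have hℓ1 : ℓ + 1 ∈ Finset.Icc 1 (n+1) := Finset.mem_Icc.mpr ⟨by omega, by omega⟩
  have hu1 : 0 ≤ u (ℓ+1) := hnn' _ hℓ1
  have hfl : 0 ≤ u (ℓ+1) / (u (ℓ+1) + u0) := div_nonneg hu1 (by linarith)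
  -- each summand is nonnegative
  have hterm : ∀ j ∈ Finset.Icc 1 ℓ,
      0 ≤ (u j / (u j + u0) - u (ℓ+1) / (u (ℓ+1) + u0)) * x j := by
    intro j hj
    rw [Finset.mem_Icc] at hj
    have hjn : j ∈ Finset.Icc 1 n := Finset.mem_Icc.mpr ⟨hj.1, by omega⟩
    have hjn1 : j ∈ Finset.Icc 1 (n+1) := Finset.mem_Icc.mpr ⟨hj.1, by omega⟩
    rcases hx j hjn with h0 | h1
    · rw [h0, mul_zero]
    · rw [h1, mul_one, sub_nonneg]
      exact hf _ _ hu1 (hmono j hjn1 (ℓ+1) hℓ1 (by omega))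
  have hsum : 0 ≤ ∑ j ∈ Finset.Icc 1 ℓ,
      (u j / (u j + u0) - u (ℓ+1) / (u (ℓ+1) + u0)) * x j := Finset.sum_nonneg hterm
  -- analyze Phi
  set S := (Finset.Icc 1 n).filter fun j => x j = 1 with hSdef
  have hmem : Phi 1 u u0 S ∈
      (S.powerset.filter fun S' => S'.card ≤ 1).image
        (fun S' => (∑ j ∈ S', u j) / ((∑ j ∈ S', u j) + u0)) :=
    Finset.max'_mem _ _
  rw [Finset.mem_image] at hmem
  obtain ⟨S', hS', hval⟩ := hmem
  rw [Finset.mem_filter, Finset.mem_powerset] at hS'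
  have hwv : w ≤ (∑ j ∈ S', u j) / ((∑ j ∈ S', u j) + u0) := by
    rw [hval]; exact hw
  rcases S'.eq_empty_or_nonempty with rfl | hne
  · simp only [Finset.sum_empty, zero_add, zero_div] at hwv
    linarith
  · have hcard : S'.card = 1 := le_antisymm hS'.2 (Finset.one_le_card.mpr hne)
    obtain ⟨k, rfl⟩ := Finset.card_eq_one.mp hcard
    have hk : k ∈ (Finset.Icc 1 n).filter fun j => x j = 1 :=
      hS'.1 (Finset.mem_singleton_self k)
    rw [Finset.mem_filter] at hk
    have hkn : k ∈ Finset.Icc 1 n := hk.1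
    have hk1 : x k = 1 := hk.2
    rw [Finset.sum_singleton] at hwv
    have hkn' := Finset.mem_Icc.mp hkn
    have hkn1 : k ∈ Finset.Icc 1 (n+1) := Finset.mem_Icc.mpr ⟨hkn'.1, by omega⟩
    by_cases hkℓ : k ≤ ℓ
    · have hksum := Finset.single_le_sum hterm (Finset.mem_Icc.mpr ⟨hkn'.1, hkℓ⟩)
      rw [hk1, mul_one] at hksum
      linarith
    · have : u k ≤ u (ℓ+1) := hmono (ℓ+1) hℓ1 k hkn1 (by omega)
      have := hf (u k) (u (ℓ+1)) (hnn' _ hkn1) this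
      linarith
end

section
/- Let P = {(w,x) ∈ ℝ × [0,1]^n : w ≤ f_ℓ(x), ∀ℓ ∈ [n]} where f_ℓ(x) = u_{ℓ+1}/(u_{ℓ+1}+u₀) + ∑_{j=1}^{ℓ} ( u_j/(u_j+u₀) − u_{ℓ+1}/(u_{ℓ+1}+u₀) ) x_j, with u₀ > 0, u₁ ≥ ... ≥ uₙ ≥ u_{n+1} := 0. Then every extreme point (w*, x*) of P has x* ∈ {0,1}^n. -/
/-!
Write `S_m(x) = ∑_{j < m} x_j` and `a_m = u_m / (u_m + u₀)`, which is antitone. Then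
`f_{ℓ+1}(x) - f_ℓ(x) = (a_{ℓ+1} - a_{ℓ+2}) (S_{ℓ+1}(x) - 1)`, a nonnegative weight times an
increasing quantity, so `ℓ ↦ f_ℓ(x)` first decreases and then increases. Hence between two tight
constraints every increment vanishes: either `a_{ℓ+1} = a_{ℓ+2}` or `S_{ℓ+1}(x) = 1`.

If `x_{j₀} ∈ (0,1)`, we move `x` along a direction `d` supported on fractional coordinates with
`S_m(d) = 0` whenever `S_m(x) = 1`: `d = e_{j₀}` if no such `m` exceeds `j₀`, and otherwise
`d = e_{j₀} - e_{j'}` for a second fractional coordinate `j'` below the least such `m`. By the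
above, the linear parts of all tight constraints agree on `d`, so moving `w` by that common value
keeps every tight constraint tight, and `(w, x)` is the midpoint of two points of `P`.
-/

open Finset Filter Topology

theorem notMem_extremePoints_of_eventually_add_smul_mem {E : Type*} [AddCommGroup E]
    [Module ℝ E] {A : Set E} {p v : E} (hv : v ≠ 0) (h : ∀ᶠ t in 𝓝 (0 : ℝ), p + t • v ∈ A) :
    p ∉ A.extremePoints ℝ := by
  intro hp
  obtain ⟨ε, hε, hball⟩ := Metric.eventually_nhds_iff.mp h
  have hplus := @hball (ε / 2) (by rw [Real.dist_0_eq_abs, abs_of_pos (by positivity)]; linarith)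
  have hminus := @hball (-(ε / 2))
    (by rw [Real.dist_0_eq_abs, abs_neg, abs_of_pos (by positivity)]; linarith)
  rw [neg_smul, ← sub_eq_add_neg] at hminus
  have hfix : p + (ε / 2) • v = p := hp.2 hplus hminus (mem_openSegment_add_sub _ _)
  exact hv ((smul_eq_zero.mp (add_eq_left.mp hfix)).resolve_left (by positivity))

theorem eventually_nonneg_add_mul {c s : ℝ} (hc : 0 ≤ c) (h : 0 < c ∨ s = 0) :
    ∀ᶠ t in 𝓝 (0 : ℝ), 0 ≤ c + t * s := by
  rcases h with hc | rfl
  · have hlim : Tendsto (fun t : ℝ => c + t * s) (𝓝 0) (𝓝 c) :=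
      Continuous.tendsto' (by fun_prop) 0 c (by simp)
    exact (hlim.eventually (lt_mem_nhds hc)).mono fun _ => le_of_lt
  · simpa using hc

theorem div_add_le_div_add {c v w : ℝ} (hc : 0 < c) (hv : 0 ≤ v) (hvw : v ≤ w) :
    v / (v + c) ≤ w / (w + c) := by
  rw [div_le_div_iff₀ (by positivity) (by linarith)]
  nlinarith

theorem exists_ne_mem_Ioo_of_sum_eq_one {ι : Type*} {s : Finset ι} {x : ι → ℝ}
    (hx : ∀ i ∈ s, 0 ≤ x i ∧ x i ≤ 1) (hsum : ∑ i ∈ s, x i = 1) {i₀ : ι} (hi₀ : i₀ ∈ s)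
    (h₀ : 0 < x i₀ ∧ x i₀ < 1) : ∃ i ∈ s, i ≠ i₀ ∧ 0 < x i ∧ x i < 1 := by
  classical
  by_contra! hint
  have hbool : ∀ i ∈ s.erase i₀, x i = if x i = 1 then 1 else 0 := by
    intro i hi
    obtain ⟨hne, hs⟩ := mem_erase.mp hi
    split_ifs with h1
    · exact h1
    · by_contra h0
      exact h1 (le_antisymm (hx i hs).2 (hint i hs hne ((hx i hs).1.lt_of_ne' h0)))
  rw [← add_sum_erase s x hi₀, sum_congr rfl hbool, sum_boole] at hsum
  rcases Nat.eq_zero_or_pos #{i ∈ s.erase i₀ | x i = 1} with hk | hk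
  · rw [hk] at hsum
    norm_num at hsum
    linarith
  · have : (1 : ℝ) ≤ #{i ∈ s.erase i₀ | x i = 1} := by exact_mod_cast hk
    linarith

/-- The increments `F (q + 1) - F q = c q * (s q - 1)` with `c ≥ 0` and `s` monotone change sign
at most once, from `≤ 0` to `≥ 0`; so between two minimizers of `F` they all vanish. -/
theorem increment_eq_zero_of_isMinOn {F c s : ℕ → ℝ} {ℓ ℓ' r : ℕ}
    (hF : ∀ q, F (q + 1) - F q = c q * (s q - 1)) (hc : ∀ q ∈ Ico ℓ ℓ', 0 ≤ c q)
    (hs : Monotone s) (hmin : ∀ q ∈ Icc ℓ ℓ', F ℓ ≤ F q) (hℓ' : F ℓ' = F ℓ) (hr : r ∈ Ico ℓ ℓ') :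
    c r * (s r - 1) = 0 := by
  obtain ⟨hℓr, hrℓ'⟩ := mem_Ico.mp hr
  have htel : ∀ i j, i ≤ j → ∑ q ∈ Ico i j, c q * (s q - 1) = F j - F i := fun i j hij => by
    simp_rw [← hF]
    exact sum_Ico_sub F hij
  have hcr := hc r hr
  rcases lt_trichotomy (c r * (s r - 1)) 0 with hneg | hzero | hpos
  · have hsr : s r < 1 := by nlinarith
    have hbefore : ∑ q ∈ Ico ℓ r, c q * (s q - 1) ≤ 0 := sum_nonpos fun q hq => by
      obtain ⟨hℓq, hqr⟩ := mem_Ico.mp hq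
      exact mul_nonpos_of_nonneg_of_nonpos (hc q (mem_Ico.mpr ⟨hℓq, by omega⟩))
        (by linarith [hs hqr.le])
    have hsucc := hmin (r + 1) (mem_Icc.mpr ⟨by omega, by omega⟩)
    have := htel ℓ (r + 1) (by omega)
    rw [sum_Ico_succ_top hℓr] at this
    linarith
  · exact hzero
  · have hsr : 1 < s r := by nlinarith
    have hafter : c r * (s r - 1) ≤ ∑ q ∈ Ico r ℓ', c q * (s q - 1) :=
      single_le_sum (f := fun q => c q * (s q - 1)) (fun q hq => by
        obtain ⟨hrq, hqℓ'⟩ := mem_Ico.mp hq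
        exact mul_nonneg (hc q (mem_Ico.mpr ⟨by omega, hqℓ'⟩)) (by linarith [hs hrq]))
        (mem_Ico.mpr ⟨le_rfl, hrℓ'⟩)
    have hr' := hmin r (mem_Icc.mpr ⟨hℓr, hrℓ'.le⟩)
    have := htel r ℓ' hrℓ'.le
    linarith

namespace CutPolyhedron

def prefixIndicator (n m : ℕ) : Fin n → ℝ := fun j => if (j : ℕ) < m then 1 else 0

/-- The coefficients of `x` in the paper's `f_ℓ(x)`, with `a m = u m / (u m + u₀)`; the
coordinate `j : Fin n` is the paper's `x_{j+1}`. -/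
def cutCoeff (a : ℕ → ℝ) (n ℓ : ℕ) : Fin n → ℝ :=
  fun j => if (j : ℕ) < ℓ then a (j + 1) - a (ℓ + 1) else 0

variable {n : ℕ}

def cutBound (a : ℕ → ℝ) (ℓ : ℕ) (y : Fin n → ℝ) : ℝ := a (ℓ + 1) + cutCoeff a n ℓ ⬝ᵥ y

def cutPolyhedron (a : ℕ → ℝ) (n : ℕ) : Set (ℝ × (Fin n → ℝ)) :=
  {p | (∀ j, 0 ≤ p.2 j ∧ p.2 j ≤ 1) ∧ ∀ ℓ ∈ Icc 1 n, p.1 ≤ cutBound a ℓ p.2}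

theorem prefixIndicator_mono {m m' : ℕ} (h : m ≤ m') :
    prefixIndicator n m ≤ prefixIndicator n m' := fun j => by
  unfold prefixIndicator
  split_ifs <;> first | omega | norm_num

theorem prefixIndicator_dotProduct (m : ℕ) (y : Fin n → ℝ) :
    prefixIndicator n m ⬝ᵥ y = ∑ j ∈ univ.filter (fun j : Fin n => (j : ℕ) < m), y j := by
  simp [dotProduct, prefixIndicator, sum_filter]

theorem cutCoeff_succ (a : ℕ → ℝ) (ℓ : ℕ) :
    cutCoeff a n (ℓ + 1)
      = cutCoeff a n ℓ + (a (ℓ + 1) - a (ℓ + 2)) • prefixIndicator n (ℓ + 1) := by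
  funext j
  simp only [cutCoeff, prefixIndicator, Pi.add_apply, Pi.smul_apply, smul_eq_mul]
  by_cases hj : (j : ℕ) < ℓ
  · rw [if_pos (by omega), if_pos hj, if_pos (by omega)]
    ring
  · by_cases hj' : (j : ℕ) = ℓ
    · rw [if_pos (by omega), if_neg hj, if_pos (by omega), hj']
      ring
    · rw [if_neg (by omega), if_neg hj, if_neg (by omega)]
      ring

theorem cutBound_succ (a : ℕ → ℝ) (ℓ : ℕ) (y : Fin n → ℝ) :
    cutBound a (ℓ + 1) y - cutBound a ℓ y
      = (a (ℓ + 1) - a (ℓ + 2)) * (prefixIndicator n (ℓ + 1) ⬝ᵥ y - 1) := by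
  simp only [cutBound, cutCoeff_succ, add_dotProduct, smul_dotProduct, smul_eq_mul]
  ring

theorem cutBound_add_smul (a : ℕ → ℝ) (ℓ : ℕ) (y d : Fin n → ℝ) (t : ℝ) :
    cutBound a ℓ (y + t • d) = cutBound a ℓ y + t * (cutCoeff a n ℓ ⬝ᵥ d) := by
  simp only [cutBound, dotProduct_add, dotProduct_smul, smul_eq_mul]
  ring

theorem notMem_extremePoints_of_direction {a : ℕ → ℝ} {p : ℝ × (Fin n → ℝ)}
    (hp : p ∈ cutPolyhedron a n) {d : Fin n → ℝ} (hd : d ≠ 0)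
    (hfrac : ∀ j, d j ≠ 0 → 0 < p.2 j ∧ p.2 j < 1) (dw : ℝ)
    (htight : ∀ ℓ ∈ Icc 1 n, p.1 = cutBound a ℓ p.2 → cutCoeff a n ℓ ⬝ᵥ d = dw) :
    p ∉ (cutPolyhedron a n).extremePoints ℝ := by
  refine notMem_extremePoints_of_eventually_add_smul_mem (v := (dw, d)) (by simp [hd]) ?_
  obtain ⟨hbox, hcut⟩ := hp
  have hbox' : ∀ j, ∀ᶠ t in 𝓝 (0 : ℝ),
      0 ≤ p.2 j + t * d j ∧ 0 ≤ (1 - p.2 j) + t * -d j := fun j => by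
    have h : (0 < p.2 j ∧ p.2 j < 1) ∨ d j = 0 := or_iff_not_imp_right.2 (hfrac j)
    exact (eventually_nonneg_add_mul (hbox j).1 (h.imp And.left id)).and
      (eventually_nonneg_add_mul (sub_nonneg.2 (hbox j).2)
        (h.imp (fun h => sub_pos.2 h.2) neg_eq_zero.mpr))
  have hcut' : ∀ ℓ ∈ Icc 1 n, ∀ᶠ t in 𝓝 (0 : ℝ),
      0 ≤ (cutBound a ℓ p.2 - p.1) + t * (cutCoeff a n ℓ ⬝ᵥ d - dw) := fun ℓ hℓ => by
    refine eventually_nonneg_add_mul (sub_nonneg.2 (hcut ℓ hℓ)) ?_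
    rcases (hcut ℓ hℓ).lt_or_eq with hlt | heq
    · exact Or.inl (sub_pos.2 hlt)
    · exact Or.inr (sub_eq_zero.2 (htight ℓ hℓ heq))
  filter_upwards [eventually_all.2 hbox', (eventually_all_finset _).2 hcut'] with t hb hc
  refine ⟨fun j => ?_, fun ℓ hℓ => ?_⟩
  · simp only [Prod.snd_add, Prod.smul_snd, Pi.add_apply, Pi.smul_apply, smul_eq_mul]
    constructor <;> linarith [hb j]
  · simp only [Prod.fst_add, Prod.snd_add, Prod.smul_fst, Prod.smul_snd, smul_eq_mul,
      cutBound_add_smul]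
    linarith [hc ℓ hℓ]

theorem exists_direction_of_fractional {x : Fin n → ℝ} (hx : ∀ j, 0 ≤ x j ∧ x j ≤ 1)
    {j₀ : Fin n} (h₀ : 0 < x j₀ ∧ x j₀ < 1) :
    ∃ d : Fin n → ℝ, d ≠ 0 ∧ (∀ j, d j ≠ 0 → 0 < x j ∧ x j < 1) ∧
      ∀ m, prefixIndicator n m ⬝ᵥ x = 1 → prefixIndicator n m ⬝ᵥ d = 0 := by
  classical
  by_cases habove : ∃ m, prefixIndicator n m ⬝ᵥ x = 1 ∧ (j₀ : ℕ) < m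
  swap
  · refine ⟨Pi.single j₀ 1, fun h => by simpa using congr_fun h j₀, fun j hj => ?_,
      fun m hm => ?_⟩
    · obtain rfl : j = j₀ := by
        by_contra hne
        simp [hne] at hj
      exact h₀
    · simpa [prefixIndicator] using fun h => habove ⟨m, hm, h⟩
  obtain ⟨m, hm, hj₀m⟩ := habove
  have hex : ∃ m, prefixIndicator n m ⬝ᵥ x = 1 := ⟨m, hm⟩
  set m₀ := Nat.find hex
  have hm₀ : prefixIndicator n m₀ ⬝ᵥ x = 1 := Nat.find_spec hex
  have hj₀m₀ : (j₀ : ℕ) < m₀ := by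
    by_contra! hle
    have hind : prefixIndicator n m₀ + Pi.single j₀ 1 ≤ prefixIndicator n m := fun j => by
      by_cases hj : j = j₀
      · subst hj
        simp [prefixIndicator, hj₀m, show ¬ (j : ℕ) < m₀ by omega]
      · simp only [prefixIndicator, Pi.add_apply, Pi.single_apply, hj, if_false]
        split_ifs <;> first | omega | norm_num
    have := dotProduct_le_dotProduct_of_nonneg_right hind (fun j => (hx j).1)
    rw [add_dotProduct, single_dotProduct, hm₀, hm] at this
    linarith [h₀.1]
  rw [prefixIndicator_dotProduct] at hm₀
  obtain ⟨j', hj'm₀, hj'ne, hj'⟩ := exists_ne_mem_Ioo_of_sum_eq_one (fun j _ => hx j) hm₀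
    (by simpa using hj₀m₀) h₀
  have hj'm₀ : (j' : ℕ) < m₀ := by simpa using hj'm₀
  refine ⟨Pi.single j₀ 1 - Pi.single j' 1, fun h => by
      simpa [Pi.single_apply, hj'ne.symm] using congr_fun h j₀, fun j hj => ?_,
    fun m hm => ?_⟩
  · by_cases h : j = j₀
    · exact h ▸ h₀
    · by_cases h' : j = j'
      · exact h' ▸ hj'
      · simp [h, h'] at hj
  · have hm₀m : m₀ ≤ m := Nat.find_min' hex hm
    simp [dotProduct_sub, prefixIndicator, show (j₀ : ℕ) < m by omega,
      show (j' : ℕ) < m by omega]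

theorem cutCoeff_dotProduct_eq_of_tight {a : ℕ → ℝ} (ha : AntitoneOn a (Set.Icc 1 (n + 1)))
    {p : ℝ × (Fin n → ℝ)} (hp : p ∈ cutPolyhedron a n) {d : Fin n → ℝ}
    (hd : ∀ m, prefixIndicator n m ⬝ᵥ p.2 = 1 → prefixIndicator n m ⬝ᵥ d = 0)
    {ℓ ℓ' : ℕ} (hℓ : ℓ ∈ Icc 1 n) (hℓ' : ℓ' ∈ Icc 1 n) (hle : ℓ ≤ ℓ')
    (htight : p.1 = cutBound a ℓ p.2) (htight' : p.1 = cutBound a ℓ' p.2) :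
    cutCoeff a n ℓ ⬝ᵥ d = cutCoeff a n ℓ' ⬝ᵥ d := by
  obtain ⟨hbox, hcut⟩ := hp
  obtain ⟨h1ℓ, hℓn⟩ := mem_Icc.mp hℓ
  obtain ⟨h1ℓ', hℓ'n⟩ := mem_Icc.mp hℓ'
  have hc : ∀ q ∈ Ico ℓ ℓ', 0 ≤ a (q + 1) - a (q + 2) := fun q hq => by
    obtain ⟨hℓq, hqℓ'⟩ := mem_Ico.mp hq
    exact sub_nonneg.2 (ha ⟨by omega, by omega⟩ ⟨by omega, by omega⟩ (by omega))
  have hincr : ∀ q ∈ Ico ℓ ℓ',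
      (a (q + 1) - a (q + 2)) * (prefixIndicator n (q + 1) ⬝ᵥ p.2 - 1) = 0 := fun q hq =>
    increment_eq_zero_of_isMinOn (F := fun q => cutBound a q p.2) (cutBound_succ a · p.2) hc
      (fun _ _ h => dotProduct_le_dotProduct_of_nonneg_right (prefixIndicator_mono (by omega))
        fun j => (hbox j).1)
      (fun q hq => htight ▸ hcut q (by simp only [mem_Icc] at hq ⊢; omega))
      (htight' ▸ htight) hq
  have hstep : ∀ q ∈ Ico ℓ ℓ', cutCoeff a n (q + 1) ⬝ᵥ d - cutCoeff a n q ⬝ᵥ d = 0 :=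
    fun q hq => by
      rw [cutCoeff_succ, add_dotProduct, smul_dotProduct, smul_eq_mul, add_sub_cancel_left]
      rcases mul_eq_zero.mp (hincr q hq) with h | h
      · rw [h, zero_mul]
      · rw [hd _ (sub_eq_zero.mp h), mul_zero]
  have := sum_Ico_sub (fun q => cutCoeff a n q ⬝ᵥ d) hle
  rw [sum_eq_zero hstep] at this
  linarith

theorem eq_zero_or_eq_one_of_mem_extremePoints {a : ℕ → ℝ}
    (ha : AntitoneOn a (Set.Icc 1 (n + 1))) {p : ℝ × (Fin n → ℝ)}
    (hp : p ∈ (cutPolyhedron a n).extremePoints ℝ) (j : Fin n) : p.2 j = 0 ∨ p.2 j = 1 := by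
  classical
  by_contra! hj
  have hbox := hp.1.1
  obtain ⟨d, hd0, hdfrac, hdS⟩ :=
    exists_direction_of_fractional hbox ⟨(hbox j).1.lt_of_ne' hj.1, (hbox j).2.lt_of_ne hj.2⟩
  let IsTight ℓ := ℓ ∈ Icc 1 n ∧ p.1 = cutBound a ℓ p.2
  let dw := if h : ∃ ℓ, IsTight ℓ then cutCoeff a n h.choose ⬝ᵥ d else 0
  refine notMem_extremePoints_of_direction hp.1 hd0 hdfrac dw (fun ℓ hℓ htight => ?_) hp
  have h : ∃ ℓ, IsTight ℓ := ⟨ℓ, hℓ, htight⟩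
  obtain ⟨hℓ₀, htight₀⟩ := h.choose_spec
  simp only [dw, dif_pos h]
  rcases le_total ℓ h.choose with hle | hle
  · exact cutCoeff_dotProduct_eq_of_tight ha hp.1 hdS hℓ hℓ₀ hle htight htight₀
  · exact (cutCoeff_dotProduct_eq_of_tight ha hp.1 hdS hℓ₀ hℓ hle htight₀ htight).symm

end CutPolyhedron

open CutPolyhedron in
theorem stmt_13_general (n : ℕ) (u : ℕ → ℝ) (u0 : ℝ) (hu0 : 0 < u0)
    (hn1 : u (n + 1) = 0)
    (hmono : ∀ j ∈ Finset.Icc 1 (n+1), ∀ k ∈ Finset.Icc 1 (n+1), j ≤ k → u k ≤ u j)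
    (P : Set (ℝ × (Fin n → ℝ)))
    (hP : P = {p | (∀ j, 0 ≤ p.2 j ∧ p.2 j ≤ 1) ∧ ∀ ℓ ∈ Finset.Icc 1 n,
      p.1 ≤ u (ℓ+1) / (u (ℓ+1) + u0) +
        ∑ j : Fin n, (if (j : ℕ) + 1 ≤ ℓ then
          u ((j:ℕ)+1) / (u ((j:ℕ)+1) + u0) - u (ℓ+1) / (u (ℓ+1) + u0) else 0) * p.2 j})
    (p : ℝ × (Fin n → ℝ)) (hp : p ∈ Set.extremePoints ℝ P) :
    ∀ j, p.2 j = 0 ∨ p.2 j = 1 := by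
  have hu : AntitoneOn u (Set.Icc 1 (n + 1)) :=
    fun j hj k hk => hmono j (by simpa using hj) k (by simpa using hk)
  have hu_nonneg : ∀ m ∈ Set.Icc 1 (n + 1), 0 ≤ u m := fun m hm =>
    hn1 ▸ hu hm ⟨by omega, le_rfl⟩ hm.2
  have ha : AntitoneOn (fun m => u m / (u m + u0)) (Set.Icc 1 (n + 1)) :=
    fun j hj k hk hjk => div_add_le_div_add hu0 (hu_nonneg k hk) (hu hj hk hjk)
  subst hP
  exact eq_zero_or_eq_one_of_mem_extremePoints ha hp

/-- every extreme point of the polyhedron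
`P = {(w,x) ∈ ℝ × [0,1]ⁿ : w ≤ f_ℓ(x) ∀ℓ ∈ [n]}` has `x ∈ {0,1}ⁿ`. The coordinate `x j`
(for `j : Fin n`) corresponds to facility `(j:ℕ)+1 ∈ [n]`. -/
theorem stmt_13 (n : ℕ) (u : ℕ → ℝ) (u0 : ℝ) (hu0 : 0 < u0)
    (hnn : ∀ j ∈ Finset.Icc 1 n, 0 ≤ u j) (hn1 : u (n + 1) = 0)
    (hmono : ∀ j ∈ Finset.Icc 1 (n+1), ∀ k ∈ Finset.Icc 1 (n+1), j ≤ k → u k ≤ u j)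
    (P : Set (ℝ × (Fin n → ℝ)))
    (hP : P = {p | (∀ j, 0 ≤ p.2 j ∧ p.2 j ≤ 1) ∧ ∀ ℓ ∈ Finset.Icc 1 n,
      p.1 ≤ u (ℓ+1) / (u (ℓ+1) + u0) +
        ∑ j : Fin n, (if (j : ℕ) + 1 ≤ ℓ then
          u ((j:ℕ)+1) / (u ((j:ℕ)+1) + u0) - u (ℓ+1) / (u (ℓ+1) + u0) else 0) * p.2 j})
    (p : ℝ × (Fin n → ℝ)) (hp : p ∈ Set.extremePoints ℝ P) :
    ∀ j, p.2 j = 0 ∨ p.2 j = 1 :=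
  stmt_13_general n u u0 hu0 hn1 hmono P hP p hp
end

section
/- Let Ψ : 2^[n] → ℝ be submodular, Y = {(w,x) ∈ ℝ × {0,1}^n : w ≤ Ψ(S^x)}, and ρ_j(S) = Ψ(S∪{j}) − Ψ(S). For any S ⊆ [n], the inequality w ≤ Ψ(S) + ∑_{j∉S} ρ_j(S) x_j, restricted to the face where x_j = 1 for all j ∈ S, is tight at the |[n]\S| + 1 affinely independent points (Ψ(S), χ_S) and (Ψ(S∪{t}), χ_{S∪{t}}) for t ∈ [n]\S; hence it defines a facet of conv({(w,x) ∈ Y : x_j = 1 ∀j ∈ S}). -/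
open Finset

/-- for submodular `Ψ`, the inequality `w ≤ Ψ(S) + ∑_{j∉S} ρ_j(S) x_j` is valid
for `Y(∅,S) = {(w,x) ∈ Y : x_j = 1 ∀j ∈ S}`, is tight at the `|[n]\S| + 1` affinely
independent points `(Ψ(S), χ_S)` and `(Ψ(S∪{t}), χ_{S∪{t}})`, `t ∈ [n]\S`, and hence
defines a facet (a face of dimension `n − |S|`) of `conv(Y(∅,S))`. -/
theorem stmt_18 (n : ℕ) (Ψ : Finset (Fin n) → ℝ)
    (hsub : ∀ S T : Finset (Fin n), S ⊆ T → ∀ j ∉ T,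
      Ψ (insert j T) - Ψ T ≤ Ψ (insert j S) - Ψ S)
    (S : Finset (Fin n))
    (Y : Set (ℝ × (Fin n → ℝ)))
    (hY : Y = {p | (∀ j, p.2 j = 0 ∨ p.2 j = 1) ∧
      p.1 ≤ Ψ (Finset.univ.filter fun j => p.2 j = 1)})
    (YS : Set (ℝ × (Fin n → ℝ))) (hYS : YS = {p ∈ Y | ∀ j ∈ S, p.2 j = 1})
    (pts : Option {t : Fin n // t ∉ S} → ℝ × (Fin n → ℝ))
    (hpts : pts = fun o => match o with
      | none => (Ψ S, fun j => if j ∈ S then (1 : ℝ) else 0)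
      | some t => (Ψ (insert t.1 S), fun j => if j ∈ insert t.1 S then (1 : ℝ) else 0)) :
    (∀ p ∈ YS, p.1 ≤ Ψ S + ∑ j ∈ Finset.univ \ S, (Ψ (insert j S) - Ψ S) * p.2 j) ∧
    (∀ o, pts o ∈ YS ∧
      (pts o).1 = Ψ S + ∑ j ∈ Finset.univ \ S, (Ψ (insert j S) - Ψ S) * (pts o).2 j) ∧
    AffineIndependent ℝ pts ∧
    Module.finrank ℝ (vectorSpan ℝ
      {p ∈ convexHull ℝ YS |
        p.1 = Ψ S + ∑ j ∈ Finset.univ \ S, (Ψ (insert j S) - Ψ S) * p.2 j}) = n - S.card := by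
  classical
  subst hY hYS hpts
  -- abbreviation for the right-hand side of the inequality
  set R : (Fin n → ℝ) → ℝ :=
    fun x => Ψ S + ∑ j ∈ Finset.univ \ S, (Ψ (insert j S) - Ψ S) * x j with hR
  -- Key submodularity consequence
  have key : ∀ A : Finset (Fin n), Disjoint S A →
      Ψ (S ∪ A) ≤ Ψ S + ∑ j ∈ A, (Ψ (insert j S) - Ψ S) := by
    intro A
    induction A using Finset.induction_on with
    | empty => simp
    | @insert j A hj ih =>
      intro hd
      have hjS : j ∉ S := fun h => Finset.disjoint_left.mp hd h (Finset.mem_insert_self j A)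
      have hdA : Disjoint S A := hd.mono_right (Finset.subset_insert _ _)
      have hjSA : j ∉ S ∪ A := by simp [hjS, hj]
      have h2 := hsub S (S ∪ A) Finset.subset_union_left j hjSA
      have h1 : S ∪ insert j A = insert j (S ∪ A) := by
        ext a; simp only [Finset.mem_union, Finset.mem_insert]; tauto
      have h3 := ih hdA
      rw [h1, Finset.sum_insert hj]
      linarith
  -- validity
  have valid : ∀ p : ℝ × (Fin n → ℝ),
      p ∈ {p ∈ {p : ℝ × (Fin n → ℝ) | (∀ j, p.2 j = 0 ∨ p.2 j = 1) ∧
        p.1 ≤ Ψ (Finset.univ.filter fun j => p.2 j = 1)} | ∀ j ∈ S, p.2 j = 1} →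
      p.1 ≤ R p.2 := by
    rintro p ⟨⟨h01, hw⟩, hxS⟩
    set T := Finset.univ.filter (fun j => p.2 j = 1) with hT
    have hST : S ⊆ T := fun j hj => by
      simp only [hT, Finset.mem_filter, Finset.mem_univ, true_and]
      exact hxS j hj
    have hdisj : Disjoint S (T \ S) := Finset.disjoint_sdiff
    have hUnion : S ∪ (T \ S) = T := Finset.union_sdiff_of_subset hST
    have h1 := key (T \ S) hdisj
    rw [hUnion] at h1
    have h2 : ∑ j ∈ Finset.univ \ S, (Ψ (insert j S) - Ψ S) * p.2 j
        = ∑ j ∈ T \ S, (Ψ (insert j S) - Ψ S) := by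
      have hTS : T \ S = (Finset.univ \ S).filter (fun j => p.2 j = 1) := by
        ext j
        simp only [hT, Finset.mem_sdiff, Finset.mem_filter, Finset.mem_univ, true_and]
        tauto
      rw [hTS, Finset.sum_filter]
      refine Finset.sum_congr rfl fun j hj => ?_
      rcases h01 j with h | h <;> simp [h]
    simp only [hR]
    rw [h2]
    linarith
  -- membership and tightness of the points
  have hsum_none : ∑ j ∈ Finset.univ \ S,
      (Ψ (insert j S) - Ψ S) * (if j ∈ S then (1:ℝ) else 0) = 0 := by
    refine Finset.sum_eq_zero fun j hj => ?_
    rw [Finset.mem_sdiff] at hj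
    simp [hj.2]
  have hfilter_none :
      (Finset.univ.filter fun j => (if j ∈ S then (1:ℝ) else 0) = 1) = S := by
    ext j; by_cases h : j ∈ S <;> simp [h]
  have hsum_some : ∀ t : {t : Fin n // t ∉ S}, ∑ j ∈ Finset.univ \ S,
      (Ψ (insert j S) - Ψ S) * (if j ∈ insert t.1 S then (1:ℝ) else 0)
        = Ψ (insert t.1 S) - Ψ S := by
    intro t
    have hmem : t.1 ∈ Finset.univ \ S := by simp [t.2]
    have hz : ∀ j ∈ Finset.univ \ S, j ≠ t.1 →
        (Ψ (insert j S) - Ψ S) * (if j ∈ insert t.1 S then (1:ℝ) else 0) = 0 := by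
      intro j hj hne
      rw [Finset.mem_sdiff] at hj
      have : j ∉ insert t.1 S := by simp [hne, hj.2]
      simp [this]
    rw [Finset.sum_eq_single_of_mem t.1 hmem hz]
    simp
  have hfilter_some : ∀ t : {t : Fin n // t ∉ S},
      (Finset.univ.filter fun j => (if j ∈ insert t.1 S then (1:ℝ) else 0) = 1)
        = insert t.1 S := by
    intro t; ext j
    simp only [Finset.mem_filter, Finset.mem_univ, true_and]
    constructor
    · intro hj
      by_contra h
      rw [if_neg h] at hj
      exact zero_ne_one hj
    · intro hj
      rw [if_pos hj]
  have mem_tight : ∀ o : Option {t : Fin n // t ∉ S},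
      ((match o with
        | none => ((Ψ S, fun j => if j ∈ S then (1:ℝ) else 0) : ℝ × (Fin n → ℝ))
        | some t => (Ψ (insert t.1 S), fun j => if j ∈ insert t.1 S then (1:ℝ) else 0))
        ∈ {p ∈ {p : ℝ × (Fin n → ℝ) | (∀ j, p.2 j = 0 ∨ p.2 j = 1) ∧
          p.1 ≤ Ψ (Finset.univ.filter fun j => p.2 j = 1)} | ∀ j ∈ S, p.2 j = 1}) ∧
      ((match o with
        | none => ((Ψ S, fun j => if j ∈ S then (1:ℝ) else 0) : ℝ × (Fin n → ℝ))
        | some t => (Ψ (insert t.1 S), fun j => if j ∈ insert t.1 S then (1:ℝ) else 0)).1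
        = R (match o with
        | none => ((Ψ S, fun j => if j ∈ S then (1:ℝ) else 0) : ℝ × (Fin n → ℝ))
        | some t => (Ψ (insert t.1 S), fun j => if j ∈ insert t.1 S then (1:ℝ) else 0)).2) := by
    intro o
    match o with
    | none =>
      refine ⟨⟨⟨fun j => ?_, ?_⟩, fun j hj => by simp [hj]⟩, ?_⟩
      · by_cases h : j ∈ S <;> simp [h]
      · simp only [hfilter_none]; exact le_refl _
      · show Ψ S = R fun j => if j ∈ S then (1:ℝ) else 0
        simp only [hR]; rw [hsum_none]; ring
    | some t =>
      refine ⟨⟨⟨fun j => ?_, ?_⟩, fun j hj => by simp [Finset.mem_insert_of_mem hj]⟩, ?_⟩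
      · by_cases h : j ∈ insert t.1 S <;> simp [h]
      · simp only [hfilter_some]; exact le_refl _
      · show Ψ (insert t.1 S) = R fun j => if j ∈ insert t.1 S then (1:ℝ) else 0
        simp only [hR]; rw [hsum_some]; ring
  -- affine independence
  have haff : AffineIndependent ℝ (fun o : Option {t : Fin n // t ∉ S} =>
      (match o with
        | none => ((Ψ S, fun j => if j ∈ S then (1:ℝ) else 0) : ℝ × (Fin n → ℝ))
        | some t => (Ψ (insert t.1 S), fun j => if j ∈ insert t.1 S then (1:ℝ) else 0))) := by
    rw [affineIndependent_iff]
    intro s w hw0 hsum i hi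
    set W : Option {t : Fin n // t ∉ S} → ℝ := fun e => if e ∈ s then w e else 0 with hW
    have hWsum : ∑ e, W e = 0 := by
      rw [← hw0]
      simp only [hW]
      rw [Finset.sum_ite_mem, Finset.univ_inter]
    have hWsum2 : ∑ e, W e • (match e with
        | none => ((Ψ S, fun j => if j ∈ S then (1:ℝ) else 0) : ℝ × (Fin n → ℝ))
        | some t => (Ψ (insert t.1 S), fun j => if j ∈ insert t.1 S then (1:ℝ) else 0)) = 0 := by
      rw [← hsum]
      rw [← Finset.sum_subset (Finset.subset_univ s) (fun e _ he => by simp [hW, he])]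
      exact Finset.sum_congr rfl fun e he => by simp [hW, he]
    have h2 : W none • ((Ψ S, fun j => if j ∈ S then (1:ℝ) else 0) : ℝ × (Fin n → ℝ))
        + ∑ u : {t : Fin n // t ∉ S}, W (some u) •
          ((Ψ (insert u.1 S), fun j => if j ∈ insert u.1 S then (1:ℝ) else 0) :
            ℝ × (Fin n → ℝ)) = 0 := by
      rw [Fintype.sum_option] at hWsum2
      exact hWsum2
    have hWsome : ∀ t : {t : Fin n // t ∉ S}, W (some t) = 0 := by
      intro t
      have h2t := congrArg (fun v : ℝ × (Fin n → ℝ) => v.2 t.1) h2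
      simp only [Prod.snd_add, Prod.snd_sum, Prod.smul_snd, Pi.add_apply, Finset.sum_apply,
        Pi.smul_apply, smul_eq_mul, Prod.snd_zero, Pi.zero_apply] at h2t
      have hz : ∀ u : {t : Fin n // t ∉ S}, u ∈ Finset.univ → u ≠ t →
          W (some u) * (if t.1 ∈ insert u.1 S then (1:ℝ) else 0) = 0 := by
        intro u _ h
        have hmem : t.1 ∉ insert u.1 S := by
          simp only [Finset.mem_insert]
          push_neg
          exact ⟨fun hh => h (Subtype.ext hh.symm), t.2⟩
        rw [if_neg hmem, mul_zero]
      rw [Finset.sum_eq_single_of_mem t (Finset.mem_univ t) hz] at h2t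
      rw [if_neg t.2, if_pos (Finset.mem_insert_self t.1 S)] at h2t
      linarith
    have hWnone : W none = 0 := by
      rw [Fintype.sum_option] at hWsum
      have : ∑ u : {t : Fin n // t ∉ S}, W (some u) = 0 :=
        Finset.sum_eq_zero fun u _ => hWsome u
      linarith
    have hWall : ∀ e, W e = 0 := fun e => by cases e with
      | none => exact hWnone
      | some t => exact hWsome t
    have := hWall i
    simpa [hW, hi] using this
  -- cardinality
  have hcard : Fintype.card (Option {t : Fin n // t ∉ S}) = (n - S.card) + 1 := by
    rw [Fintype.card_option, Fintype.card_subtype_compl, Fintype.card_fin, Fintype.card_coe]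
  refine ⟨fun p hp => valid p hp, mem_tight, haff, ?_⟩
  -- the face
  set F : Set (ℝ × (Fin n → ℝ)) :=
    {p ∈ convexHull ℝ {p ∈ {p : ℝ × (Fin n → ℝ) | (∀ j, p.2 j = 0 ∨ p.2 j = 1) ∧
      p.1 ≤ Ψ (Finset.univ.filter fun j => p.2 j = 1)} | ∀ j ∈ S, p.2 j = 1} |
      p.1 = R p.2} with hF
  show Module.finrank ℝ (vectorSpan ℝ F) = n - S.card
  -- lower bound
  have hlow : n - S.card ≤ Module.finrank ℝ (vectorSpan ℝ F) := by
    have hptsF : ∀ o : Option {t : Fin n // t ∉ S},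
        (match o with
          | none => ((Ψ S, fun j => if j ∈ S then (1:ℝ) else 0) : ℝ × (Fin n → ℝ))
          | some t => (Ψ (insert t.1 S), fun j => if j ∈ insert t.1 S then (1:ℝ) else 0)) ∈ F :=
      fun o => ⟨subset_convexHull ℝ _ (mem_tight o).1, (mem_tight o).2⟩
    have h1 := haff.finrank_vectorSpan hcard
    rw [← h1]
    exact Submodule.finrank_mono (vectorSpan_mono ℝ (Set.range_subset_iff.mpr hptsF))
  -- upper bound
  have hconv : ∀ x : Fin n → ℝ,
      ∑ t : {j : Fin n // j ∉ S}, (Ψ (insert t.1 S) - Ψ S) * x t.1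
        = ∑ j ∈ Finset.univ \ S, (Ψ (insert j S) - Ψ S) * x j := fun x =>
    (Finset.sum_subtype (Finset.univ \ S) (fun j => by simp)
      (fun j => (Ψ (insert j S) - Ψ S) * x j)).symm
  let φ : ({j : Fin n // j ∉ S} → ℝ) →ₗ[ℝ] ℝ × (Fin n → ℝ) :=
    { toFun := fun y => (∑ t : {j : Fin n // j ∉ S}, (Ψ (insert t.1 S) - Ψ S) * y t,
        fun j => if h : j ∈ S then 0 else y ⟨j, h⟩),
      map_add' := by
        intro y z
        refine Prod.ext ?_ ?_
        · simp only [Pi.add_apply, mul_add, Finset.sum_add_distrib, Prod.fst_add]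
        · funext j; by_cases h : j ∈ S <;> simp [h]
      map_smul' := by
        intro c y
        refine Prod.ext ?_ ?_
        · simp only [Pi.smul_apply, smul_eq_mul, RingHom.id_apply, Prod.smul_fst,
            Finset.mul_sum]
          exact Finset.sum_congr rfl fun t _ => by ring
        · funext j; by_cases h : j ∈ S <;> simp [h] }
  have hC : convexHull ℝ {p ∈ {p : ℝ × (Fin n → ℝ) | (∀ j, p.2 j = 0 ∨ p.2 j = 1) ∧
      p.1 ≤ Ψ (Finset.univ.filter fun j => p.2 j = 1)} | ∀ j ∈ S, p.2 j = 1}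
      ⊆ {p : ℝ × (Fin n → ℝ) | ∀ j ∈ S, p.2 j = 1} := by
    apply convexHull_min
    · exact fun p hp => hp.2
    · intro p hp q hq a b ha hb hab j hj
      have h1 := hp j hj
      have h2 := hq j hj
      show (a • p + b • q).2 j = 1
      simp only [Prod.snd_add, Prod.smul_snd, Pi.add_apply, Pi.smul_apply, smul_eq_mul,
        h1, h2, mul_one]
      exact hab
  have hspan : vectorSpan ℝ F ≤ LinearMap.range φ := by
    rw [vectorSpan_def]
    apply Submodule.span_le.mpr
    rintro v hv
    obtain ⟨p, hp, q, hq, rfl⟩ := Set.mem_vsub.mp hv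
    refine ⟨fun t => p.2 t.1 - q.2 t.1, ?_⟩
    have hp1 : ∀ j ∈ S, p.2 j = 1 := hC hp.1
    have hq1 : ∀ j ∈ S, q.2 j = 1 := hC hq.1
    have hpR : p.1 = R p.2 := hp.2
    have hqR : q.1 = R q.2 := hq.2
    refine Prod.ext ?_ ?_
    · show ∑ t : {j : Fin n // j ∉ S}, (Ψ (insert t.1 S) - Ψ S) * (p.2 t.1 - q.2 t.1)
        = (p -ᵥ q).1
      have e1 : ∑ t : {j : Fin n // j ∉ S}, (Ψ (insert t.1 S) - Ψ S) * (p.2 t.1 - q.2 t.1)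
          = (∑ t : {j : Fin n // j ∉ S}, (Ψ (insert t.1 S) - Ψ S) * p.2 t.1)
            - ∑ t : {j : Fin n // j ∉ S}, (Ψ (insert t.1 S) - Ψ S) * q.2 t.1 := by
        rw [← Finset.sum_sub_distrib]
        exact Finset.sum_congr rfl fun t _ => by ring
      rw [e1, hconv p.2, hconv q.2]
      show _ = (p - q).1
      rw [Prod.fst_sub]
      simp only [hR] at hpR hqR
      linarith
    · funext j
      show (if h : j ∈ S then 0 else p.2 j - q.2 j) = (p -ᵥ q).2 j
      have : (p -ᵥ q).2 j = p.2 j - q.2 j := rfl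
      rw [this]
      by_cases h : j ∈ S
      · rw [dif_pos h, hp1 j h, hq1 j h]; ring
      · rw [dif_neg h]
  have hup : Module.finrank ℝ (vectorSpan ℝ F) ≤ n - S.card := by
    calc Module.finrank ℝ (vectorSpan ℝ F)
        ≤ Module.finrank ℝ (LinearMap.range φ) := Submodule.finrank_mono hspan
      _ ≤ Module.finrank ℝ ({j : Fin n // j ∉ S} → ℝ) := LinearMap.finrank_range_le φ
      _ = n - S.card := by
          rw [Module.finrank_fintype_fun_eq_card, Fintype.card_subtype_compl,
            Fintype.card_fin, Fintype.card_coe]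
  exact le_antisymm hup hlow
end

section
/- Let u₀ > 0, u_j ≥ 0 sorted nonincreasingly, γ ≥ 1, and Φ(S) = max { u(S')/(u(S')+u₀) : S' ⊆ S, |S'| ≤ γ }. For fixed disjoint S₀, S₁ ⊆ [n], the convex hull of X(S₀,S₁) = { (w,x) ∈ ℝ × {0,1}^n : w ≤ Φ(S^x), x_j = 0 ∀j ∈ S₀, x_j = 1 ∀j ∈ S₁ } has dimension n + 1 − |S₀| − |S₁|. -/
open Finset

noncomputable def PhiF {n : ℕ} (γ : ℕ) (u : Fin n → ℝ) (u0 : ℝ) (S : Finset (Fin n)) : ℝ :=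
  ((S.powerset.filter fun S' => S'.card ≤ γ).image
      fun S' => (∑ j ∈ S', u j) / ((∑ j ∈ S', u j) + u0)).max'
    (Finset.Nonempty.image ⟨∅, Finset.mem_filter.mpr ⟨Finset.empty_mem_powerset S, by simp⟩⟩ _)

lemma PhiF_mono {n : ℕ} (γ : ℕ) (u : Fin n → ℝ) (u0 : ℝ) {S T : Finset (Fin n)}
    (h : S ⊆ T) : PhiF γ u u0 S ≤ PhiF γ u u0 T := by
  apply Finset.max'_subset
  apply Finset.image_subset_image
  intro S' hS'
  simp only [Finset.mem_filter, Finset.mem_powerset] at hS' ⊢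
  exact ⟨hS'.1.trans h, hS'.2⟩

/-- for disjoint `S₀, S₁ ⊆ [n]`, the convex hull of
`X(S₀,S₁) = {(w,x) ∈ ℝ × {0,1}ⁿ : w ≤ Φ(Sˣ), x_j = 0 ∀j∈S₀, x_j = 1 ∀j∈S₁}`
has dimension `n + 1 − |S₀| − |S₁|`. -/
theorem stmt_19 (n γ : ℕ) (hγ : 1 ≤ γ) (u : Fin n → ℝ) (hu : Antitone u)
    (hnn : ∀ j, 0 ≤ u j) (u0 : ℝ) (hu0 : 0 < u0)
    (S0 S1 : Finset (Fin n)) (hdisj : Disjoint S0 S1)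
    (XS : Set (ℝ × (Fin n → ℝ)))
    (hXS : XS = {p | (∀ j, p.2 j = 0 ∨ p.2 j = 1) ∧
      p.1 ≤ PhiF γ u u0 (Finset.univ.filter fun j => p.2 j = 1) ∧
      (∀ j ∈ S0, p.2 j = 0) ∧ (∀ j ∈ S1, p.2 j = 1)}) :
    Module.finrank ℝ (vectorSpan ℝ (convexHull ℝ XS)) = n + 1 - S0.card - S1.card := by
  classical
  set s : Finset (Fin n) := S0 ∪ S1 with hs
  -- characteristic vector
  set χ : Finset (Fin n) → (Fin n → ℝ) := fun T j => if j ∈ T then 1 else 0 with hχ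
  have hfilter : ∀ T : Finset (Fin n), (Finset.univ.filter fun j => χ T j = 1) = T := by
    intro T; ext j; by_cases h : j ∈ T <;> simp [hχ, h]
  have key : ∀ (w : ℝ) (T : Finset (Fin n)), Disjoint S0 T → S1 ⊆ T →
      w ≤ PhiF γ u u0 T → (w, χ T) ∈ XS := by
    intro w T h0 h1 hw
    rw [hXS]
    refine ⟨?_, ?_, ?_, ?_⟩
    · intro j; by_cases h : j ∈ T <;> simp [hχ, h]
    · simpa [hfilter T] using hw
    · intro j hj; simp [hχ, Finset.disjoint_left.mp h0 hj]
    · intro j hj; simp [hχ, h1 hj]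
  have hA : ((PhiF γ u u0 S1, χ S1) : ℝ × (Fin n → ℝ)) ∈ XS :=
    key _ S1 hdisj Finset.Subset.rfl le_rfl
  have hB : ((PhiF γ u u0 S1 - 1, χ S1) : ℝ × (Fin n → ℝ)) ∈ XS :=
    key _ S1 hdisj Finset.Subset.rfl (by linarith)
  have hC : ∀ ℓ, ℓ ∉ S0 → ℓ ∉ S1 →
      ((PhiF γ u u0 S1, χ (insert ℓ S1)) : ℝ × (Fin n → ℝ)) ∈ XS := by
    intro ℓ h0 h1
    exact key _ _ (Finset.disjoint_insert_right.mpr ⟨h0, hdisj⟩) (Finset.subset_insert _ _)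
      (PhiF_mono γ u u0 (Finset.subset_insert _ _))
  have hv0 : (((1 : ℝ), (0 : Fin n → ℝ)) : ℝ × (Fin n → ℝ)) ∈ vectorSpan ℝ XS := by
    have h := vsub_mem_vectorSpan ℝ hA hB
    rw [vsub_eq_sub] at h
    have e : ((PhiF γ u u0 S1, χ S1) - (PhiF γ u u0 S1 - 1, χ S1) : ℝ × (Fin n → ℝ))
        = ((1 : ℝ), (0 : Fin n → ℝ)) := by
      refine Prod.ext ?_ ?_ <;> simp
    rwa [e] at h
  have hvl : ∀ ℓ, ℓ ∉ S0 → ℓ ∉ S1 →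
      (((0 : ℝ), Pi.single ℓ (1 : ℝ)) : ℝ × (Fin n → ℝ)) ∈ vectorSpan ℝ XS := by
    intro ℓ h0 h1
    have h := vsub_mem_vectorSpan ℝ (hC ℓ h0 h1) hA
    rw [vsub_eq_sub] at h
    have e : ((PhiF γ u u0 S1, χ (insert ℓ S1)) - (PhiF γ u u0 S1, χ S1) : ℝ × (Fin n → ℝ))
        = ((0 : ℝ), Pi.single ℓ (1 : ℝ)) := by
      refine Prod.ext (by simp) ?_
      funext j
      simp only [Prod.snd_sub, Pi.sub_apply, hχ, Finset.mem_insert, Pi.single_apply]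
      by_cases hj : j = ℓ
      · subst hj; simp [h1]
      · simp [hj]
    rwa [e] at h
  -- the linear map whose kernel is the candidate span
  let f : (ℝ × (Fin n → ℝ)) →ₗ[ℝ] ({x // x ∈ s} → ℝ) :=
    (LinearMap.funLeft ℝ ℝ (fun j : {x // x ∈ s} => (j : Fin n))).comp
      (LinearMap.snd ℝ ℝ (Fin n → ℝ))
  have hker : ∀ p : ℝ × (Fin n → ℝ), p ∈ LinearMap.ker f ↔ ∀ j ∈ s, p.2 j = 0 := by
    intro p
    constructor
    · intro h j hj
      have := congrFun (LinearMap.mem_ker.mp h) ⟨j, hj⟩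
      simpa [f, LinearMap.funLeft] using this
    · intro h
      apply LinearMap.mem_ker.mpr
      funext j
      simpa [f, LinearMap.funLeft] using h j j.2
  have hfsurj : Function.Surjective f :=
    (LinearMap.funLeft_surjective_of_injective ℝ ℝ _ Subtype.val_injective).comp
      Prod.snd_surjective
  have hspan : vectorSpan ℝ XS = LinearMap.ker f := by
    apply le_antisymm
    · rw [vectorSpan_def, Submodule.span_le]
      rintro v hv
      rw [Set.mem_vsub] at hv
      obtain ⟨p, hp, q, hq, rfl⟩ := hv
      rw [SetLike.mem_coe, hker]
      intro j hj
      rw [hXS] at hp hq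
      obtain ⟨-, -, hp0, hp1⟩ := hp
      obtain ⟨-, -, hq0, hq1⟩ := hq
      rw [vsub_eq_sub]
      rcases Finset.mem_union.mp hj with hj | hj
      · simp [hp0 j hj, hq0 j hj]
      · simp [hp1 j hj, hq1 j hj]
    · intro p hp
      have hp' : ∀ j ∈ s, p.2 j = 0 := (hker p).mp hp
      have hdecomp : p = p.1 • (((1 : ℝ), (0 : Fin n → ℝ)) : ℝ × (Fin n → ℝ))
          + ∑ ℓ ∈ sᶜ, p.2 ℓ • (((0 : ℝ), Pi.single ℓ (1 : ℝ)) : ℝ × (Fin n → ℝ)) := by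
        refine Prod.ext ?_ ?_
        · simp [Prod.fst_sum]
        · funext j
          simp only [Prod.snd_add, Prod.smul_snd, Pi.add_apply, Pi.smul_apply,
            smul_eq_mul, Prod.snd_sum, Finset.sum_apply, Pi.single_apply, smul_zero,
            Pi.zero_apply, mul_zero, zero_add, mul_ite, mul_one, Finset.sum_ite_eq]
          by_cases hj : j ∈ s
          · simp [hj, hp' j hj]
          · simp [hj]
      rw [hdecomp]
      refine Submodule.add_mem _ (Submodule.smul_mem _ _ hv0)
        (Submodule.sum_mem _ fun ℓ hℓ => Submodule.smul_mem _ _ ?_)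
      rw [Finset.mem_compl, hs, Finset.mem_union, not_or] at hℓ
      exact hvl ℓ hℓ.1 hℓ.2
  rw [← direction_affineSpan, affineSpan_convexHull, direction_affineSpan, hspan]
  have hrn := LinearMap.finrank_range_add_finrank_ker f
  rw [LinearMap.range_eq_top.mpr hfsurj] at hrn
  have h1 : Module.finrank ℝ (⊤ : Submodule ℝ ({x // x ∈ s} → ℝ)) = s.card := by
    rw [finrank_top]
    simp [Module.finrank_pi]
  have h2 : Module.finrank ℝ (ℝ × (Fin n → ℝ)) = 1 + n := by simp
  rw [h1, h2] at hrn
  have hcard : s.card = S0.card + S1.card := Finset.card_union_of_disjoint hdisj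
  have hle : s.card ≤ n := by simpa using Finset.card_le_univ s
  omega
end
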